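/- arXiv:1812.05833 — 4 statements merged into one kernel-verified Lean document; each statement's English description precedes it below -/
import Mathlib

section
/- For every integer n > 1, the unitary Cayley graph X_n admits a proper total coloring with φ(n) + 2 colors, where φ is Euler's totient function; that is, χ''(X_n) ≤ Δ(X_n) + 2, so X_n satisfies the Total Coloring Conjecture. -/
/-!
`X_n` is the Cayley graph of `ℤ/n` on the units, so a total colouring can be given by a colour
`cv a` of each vertex and a colour `ce a d` of the edge from `a` in each unit direction `d`
(with `ce (a + d) (-d) = ce a d`). The palette is `(ZMod n)ˣ` plus two extra colours.

For even `n` the graph is bipartite by parity: colour vertices by parity and the edge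
`{a, a + d}` with `a` even by `d`.

For odd `n` the edges of directions `±d` form a Hamiltonian cycle of odd length, coloured
`b, d, -d, d, …, -d` with one break colour `b`. Fix a prime `p ∣ n` and a set `S = -S` of lifts
of the units of `ℤ/p`. A vertex `a` with `2a ≢ 0 (mod p)` gets the colour `e ∈ S` with
`2a + e ≡ 0 (mod p)`, the others the extra colour `false`. Along a direction in `S` the pattern
is repeated with period `p` and break colour `true`, placed so that a vertex coloured `e` sees
exactly the colours `true` and `-e` on its `e`-cycle. Along the other directions the break
colour is `false`, on the single edge `{-d/2, d/2}`, whose endpoints are nonzero mod `p`.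
-/

/-- A proper total coloring of `G` with `k` colors: `cv` colors the vertices,
`ce` colors the edges (as a symmetric function on adjacent pairs); adjacent
vertices get distinct colors, edges sharing an endpoint get distinct colors,
and an edge's color differs from the colors of both its endpoints. -/
def IsTotalColoring {V : Type*} (G : SimpleGraph V) (k : ℕ)
    (cv : V → Fin k) (ce : V → V → Fin k) : Prop :=
  (∀ u v, G.Adj u v → cv u ≠ cv v) ∧
  (∀ u v, G.Adj u v → ce u v = ce v u) ∧
  (∀ u v w, G.Adj u v → G.Adj u w → v ≠ w → ce u v ≠ ce u w) ∧
  (∀ u v, G.Adj u v → ce u v ≠ cv u ∧ ce u v ≠ cv v)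

/-- `G` admits a proper total coloring with `k` colors. -/
def TotalColorable {V : Type*} (G : SimpleGraph V) (k : ℕ) : Prop :=
  ∃ cv ce, IsTotalColoring G k cv ce

/-- The unitary Cayley graph `X_n`: vertices are `ZMod n`, and `a` is adjacent
to `b` iff `a - b` is a unit of `ZMod n` (equivalently, `gcd(a - b, n) = 1`). -/
def unitaryCayleyGraph (n : ℕ) : SimpleGraph (ZMod n) where
  Adj a b := a ≠ b ∧ IsUnit (a - b)
  symm := ⟨by
    rintro a b ⟨hab, hu⟩
    exact ⟨hab.symm, by simpa [neg_sub] using hu.neg⟩⟩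
  loopless := ⟨fun a h => h.1 rfl⟩

theorem totalColorable_unitaryCayleyGraph_of_stepColoring {n k : ℕ} {C : Type*} [Fintype C]
    (hC : Fintype.card C ≤ k) (cv : ZMod n → C) (ce : ZMod n → (ZMod n)ˣ → C)
    (hcv : ∀ a (d : (ZMod n)ˣ), cv a ≠ cv (a + d))
    (hce_symm : ∀ a (d : (ZMod n)ˣ), ce (a + d) (-d) = ce a d)
    (hce_inj : ∀ a, Function.Injective (ce a))
    (hce_cv : ∀ a d, ce a d ≠ cv a) :
    TotalColorable (unitaryCayleyGraph n) k := by
  classical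
  obtain ⟨f⟩ := Function.Embedding.nonempty_of_card_le (hC.trans (Fintype.card_fin k).ge)
  let ce' (a b : ZMod n) : C := if h : IsUnit (b - a) then ce a h.unit else cv a
  have hce' (a : ZMod n) (d : (ZMod n)ˣ) : ce' a (a + d) = ce a d := by
    have h : IsUnit (a + d - a) := by simp
    simp only [ce', dif_pos h]
    congr
    ext
    simp
  have hadj {a b : ZMod n} (h : (unitaryCayleyGraph n).Adj a b) : ∃ d : (ZMod n)ˣ, b = a + d :=
    ⟨(neg_sub a b ▸ h.2.neg).unit, by simp⟩
  refine ⟨fun a => f (cv a), fun a b => f (ce' a b), ?_, ?_, ?_, ?_⟩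
  · rintro a _ hab
    obtain ⟨d, rfl⟩ := hadj hab
    exact f.injective.ne (hcv a d)
  · rintro a _ hab
    obtain ⟨d, rfl⟩ := hadj hab
    have hback := hce' (a + d) (-d)
    rw [show a + d + ↑(-d) = a by simp] at hback
    dsimp only
    rw [hce', hback, hce_symm]
  · rintro a _ _ hab hac hbc
    obtain ⟨d, rfl⟩ := hadj hab
    obtain ⟨e, rfl⟩ := hadj hac
    dsimp only
    rw [hce', hce']
    exact f.injective.ne ((hce_inj a).ne fun hde => hbc (by rw [hde]))
  · rintro a _ hab
    obtain ⟨d, rfl⟩ := hadj hab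
    dsimp only
    rw [hce']
    exact ⟨f.injective.ne (hce_cv a d), f.injective.ne (hce_symm a d ▸ hce_cv (a + d) (-d))⟩

section CyclePattern

variable {m : ℕ} {C : Type*}

theorem ZMod.val_neg_mod_two_ne (hm : Odd m) {k : ZMod m} (hk : k ≠ 0) :
    (-k).val % 2 ≠ k.val % 2 := by
  have : NeZero m := ⟨hm.pos.ne'⟩
  have : NeZero k := ⟨hk⟩
  have hlt := k.val_lt
  rw [ZMod.val_neg_of_ne_zero]
  rcases hm with ⟨r, rfl⟩
  omega

def cyclePattern (b c c' : C) (k : ZMod m) : C :=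
  if k = 0 then b else if k.val % 2 = 1 then c else c'

variable {b c c' : C}

@[simp]
theorem cyclePattern_zero : cyclePattern b c c' (0 : ZMod m) = b := if_pos rfl

theorem cyclePattern_one (hm : 1 < m) : cyclePattern b c c' (1 : ZMod m) = c := by
  have : Fact (1 < m) := ⟨hm⟩
  simp [cyclePattern, ZMod.val_one]

theorem cyclePattern_eq_left_iff (hbc : b ≠ c) (hbc' : b ≠ c') {k : ZMod m} :
    cyclePattern b c c' k = b ↔ k = 0 := by
  unfold cyclePattern
  split_ifs <;> simp_all [Ne.symm hbc, Ne.symm hbc']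

theorem cyclePattern_neg (hm : Odd m) (k : ZMod m) :
    cyclePattern b c c' (-k) = cyclePattern b c' c k := by
  rcases eq_or_ne k 0 with rfl | hk
  · simp
  have hpar := ZMod.val_neg_mod_two_ne hm hk
  simp only [cyclePattern, neg_eq_zero, if_neg hk]
  split_ifs <;> first | rfl | omega

theorem cyclePattern_sub_one_ne (hm : Odd m) (hm1 : 1 < m) (hbc : b ≠ c) (hbc' : b ≠ c')
    (hcc' : c ≠ c') (k : ZMod m) : cyclePattern b c c' (k - 1) ≠ cyclePattern b c c' k := by
  have : Fact (1 < m) := ⟨hm1⟩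
  rcases eq_or_ne k 0 with rfl | hk
  · rw [zero_sub, cyclePattern_neg hm, cyclePattern_one hm1, cyclePattern_zero]
    exact hbc'.symm
  have hk' : k.val ≠ 0 := (ZMod.val_ne_zero k).2 hk
  have hval : (k - 1).val = k.val - 1 := by
    rw [ZMod.val_sub (by rw [ZMod.val_one]; omega), ZMod.val_one]
  simp only [cyclePattern, ← ZMod.val_eq_zero (k - 1), hval, if_neg hk]
  split_ifs <;> first | omega | assumption | exact Ne.symm ‹_›

end CyclePattern

section OddModulus

variable {n p : ℕ} [Fact p.Prime] (hpn : p ∣ n) (s : (ZMod p)ˣ → (ZMod n)ˣ)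

theorem ZMod.isUnit_two_of_odd (hn : Odd n) : IsUnit (2 : ZMod n) := by
  exact_mod_cast (ZMod.isUnit_iff_coprime 2 n).2 (Nat.coprime_two_left.2 hn)

theorem ZMod.castHom_ne_zero_of_isUnit {x : ZMod n} (hx : IsUnit x) :
    ZMod.castHom hpn (ZMod p) x ≠ 0 :=
  (hx.map _).ne_zero

include hpn in
theorem units_ne_neg_of_odd (hn : Odd n) (d : (ZMod n)ˣ) : d ≠ -d := fun h =>
  ZMod.ne_neg_self (hn.of_dvd_nat hpn) (ZMod.castHom_ne_zero_of_isUnit hpn d.isUnit)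
    (by simpa [-ZMod.castHom_apply] using
      congrArg (fun u : (ZMod n)ˣ => ZMod.castHom hpn (ZMod p) u) h)

theorem exists_odd_section [NeZero n] (hp : Odd p) :
    ∃ s : (ZMod p)ˣ → (ZMod n)ˣ,
      (∀ x, ZMod.castHom hpn (ZMod p) (s x) = x) ∧ ∀ x, s (-x) = -s x := by
  obtain ⟨g, hg⟩ := (ZMod.unitsMap_surjective hpn).hasRightInverse
  have hg' (x : (ZMod p)ˣ) : ZMod.castHom hpn (ZMod p) (g x) = x := by
    simpa [ZMod.unitsMap_def] using congrArg Units.val (hg x)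
  refine ⟨fun x => if (x : ZMod p).val % 2 = 1 then g x else -g (-x), fun x => ?_, fun x => ?_⟩
  · dsimp only
    split_ifs
    · exact hg' x
    · rw [Units.val_neg, map_neg, hg', Units.val_neg, neg_neg]
  · have hpar := ZMod.val_neg_mod_two_ne hp x.ne_zero
    simp only [Units.val_neg, neg_neg]
    split_ifs <;> first | omega | rfl | simp

theorem neg_mem_range_iff {s : (ZMod p)ˣ → (ZMod n)ˣ} (hs_neg : ∀ x, s (-x) = -s x)
    {d : (ZMod n)ˣ} : -d ∈ Set.range s ↔ d ∈ Set.range s := by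
  constructor <;> rintro ⟨x, hx⟩
  · exact ⟨-x, by rw [hs_neg, hx, neg_neg]⟩
  · exact ⟨-x, by rw [hs_neg, hx]⟩

theorem eq_of_mem_range_of_castHom_eq {s : (ZMod p)ˣ → (ZMod n)ˣ}
    (hs : ∀ x, ZMod.castHom hpn (ZMod p) (s x) = x) {d e : (ZMod n)ˣ}
    (hd : d ∈ Set.range s) (he : e ∈ Set.range s)
    (h : ZMod.castHom hpn (ZMod p) d = ZMod.castHom hpn (ZMod p) e) : d = e := by
  obtain ⟨x, rfl⟩ := hd
  obtain ⟨y, rfl⟩ := he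
  rw [hs, hs] at h
  rw [Units.ext h]

/-- The edge `{a, a + d}` sits at position `(a + (a + d)) / 2d` of the Hamiltonian cycle
`…, -d/2, d/2, 3d/2, …` of step `d`; reversing the step negates the position.
(`2⁻¹` is ZMod's inverse, a genuine inverse of `2` only for odd `n`.) -/
def cyclePosition (a : ZMod n) (d : (ZMod n)ˣ) : ZMod n := a * ↑d⁻¹ + 2⁻¹

theorem cyclePosition_add_self (a : ZMod n) (d : (ZMod n)ˣ) :
    cyclePosition (a + (d : ZMod n)) d = cyclePosition a d + 1 := by
  simp only [cyclePosition, add_mul, Units.mul_inv]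
  ring

theorem cyclePosition_neg (hn : Odd n) (a : ZMod n) (d : (ZMod n)ˣ) :
    cyclePosition a (-d) = 1 - cyclePosition a d := by
  have h2 := ZMod.mul_inv_of_unit 2 (ZMod.isUnit_two_of_odd hn)
  simp only [cyclePosition, inv_neg, Units.val_neg]
  linear_combination h2

theorem two_mul_add_eq_mul_cyclePosition (hn : Odd n) (a : ZMod n) (d : (ZMod n)ˣ) :
    2 * a + d = 2 * d * cyclePosition a d := by
  have h2 := ZMod.mul_inv_of_unit 2 (ZMod.isUnit_two_of_odd hn)
  have hd := Units.mul_inv d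
  simp only [cyclePosition]
  linear_combination (-(2 : ZMod n) * a) * hd - (d : ZMod n) * h2

open Classical in
noncomputable def oddEdgeColor (a : ZMod n) (d : (ZMod n)ˣ) : (ZMod n)ˣ ⊕ Bool :=
  if d ∈ Set.range s then
    cyclePattern (.inr true) (.inl d) (.inl (-d)) (ZMod.castHom hpn (ZMod p) (cyclePosition a d))
  else cyclePattern (.inr false) (.inl d) (.inl (-d)) (cyclePosition a d)

noncomputable def oddVertexColor (a : ZMod n) : (ZMod n)ˣ ⊕ Bool :=
  if h : ZMod.castHom hpn (ZMod p) (2 * a) = 0 then .inr false else .inl (s (-Units.mk0 _ h))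

variable {hpn s}

theorem oddEdgeColor_add_neg (hn : Odd n) (hs_neg : ∀ x, s (-x) = -s x)
    (a : ZMod n) (d : (ZMod n)ˣ) :
    oddEdgeColor hpn s (a + (d : ZMod n)) (-d) = oddEdgeColor hpn s a d := by
  have hpos : cyclePosition (a + (d : ZMod n)) (-d) = -cyclePosition a d := by
    rw [cyclePosition_neg hn, cyclePosition_add_self]
    ring
  simp only [oddEdgeColor, neg_mem_range_iff hs_neg, hpos, map_neg, neg_neg]
  split_ifs
  · exact cyclePattern_neg (hn.of_dvd_nat hpn) _
  · exact cyclePattern_neg hn _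

theorem oddEdgeColor_neg_ne (hn : Odd n) (hs_neg : ∀ x, s (-x) = -s x)
    (a : ZMod n) (d : (ZMod n)ˣ) : oddEdgeColor hpn s a (-d) ≠ oddEdgeColor hpn s a d := by
  have hp : Odd p := hn.of_dvd_nat hpn
  have hd : (.inl d : (ZMod n)ˣ ⊕ Bool) ≠ .inl (-d) :=
    fun h => units_ne_neg_of_odd hpn hn d (Sum.inl_injective h)
  have hpos : cyclePosition a (-d) = -(cyclePosition a d - 1) := by
    rw [cyclePosition_neg hn]
    ring
  simp only [oddEdgeColor, neg_mem_range_iff hs_neg, hpos, map_neg, map_sub, map_one, neg_neg]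
  split_ifs
  · rw [cyclePattern_neg hp]
    exact cyclePattern_sub_one_ne hp (Fact.out : p.Prime).one_lt (by simp) (by simp) hd _
  · rw [cyclePattern_neg hn]
    exact cyclePattern_sub_one_ne hn ((Fact.out : p.Prime).one_lt.trans_le
      (Nat.le_of_dvd hn.pos hpn)) (by simp) (by simp) hd _

theorem oddEdgeColor_eq_inl {a : ZMod n} {d x : (ZMod n)ˣ}
    (h : oddEdgeColor hpn s a d = .inl x) : x = d ∨ x = -d := by
  unfold oddEdgeColor cyclePattern at h
  split_ifs at h <;> simp_all

theorem oddEdgeColor_eq_inr_true (hn : Odd n) {a : ZMod n} {d : (ZMod n)ˣ}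
    (h : oddEdgeColor hpn s a d = .inr true) :
    d ∈ Set.range s ∧ ZMod.castHom hpn (ZMod p) (2 * a + d) = 0 := by
  unfold oddEdgeColor at h
  split_ifs at h with hd
  · rw [cyclePattern_eq_left_iff (by simp) (by simp)] at h
    rw [two_mul_add_eq_mul_cyclePosition hn, map_mul, h, mul_zero]
    exact ⟨hd, rfl⟩
  · unfold cyclePattern at h
    split_ifs at h
    simp at h

theorem oddEdgeColor_eq_inr_false (hn : Odd n) {a : ZMod n} {d : (ZMod n)ˣ}
    (h : oddEdgeColor hpn s a d = .inr false) : d ∉ Set.range s ∧ 2 * a + d = 0 := by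
  unfold oddEdgeColor at h
  split_ifs at h with hd
  · unfold cyclePattern at h
    split_ifs at h
    simp at h
  · rw [cyclePattern_eq_left_iff (by simp) (by simp)] at h
    rw [two_mul_add_eq_mul_cyclePosition hn, h, mul_zero]
    exact ⟨hd, rfl⟩

theorem oddEdgeColor_injective (hn : Odd n) (hs : ∀ x, ZMod.castHom hpn (ZMod p) (s x) = x)
    (hs_neg : ∀ x, s (-x) = -s x) (a : ZMod n) : Function.Injective (oddEdgeColor hpn s a) := by
  intro d e h
  by_contra hde
  by_cases hed : e = -d
  · subst hed
    exact oddEdgeColor_neg_ne hn hs_neg a d h.symm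
  cases hc : oddEdgeColor hpn s a d with
  | inl x =>
    rw [hc] at h
    rcases oddEdgeColor_eq_inl hc with rfl | rfl <;>
      rcases oddEdgeColor_eq_inl h.symm with h' | h' <;>
      simp_all [neg_eq_iff_eq_neg]
  | inr b =>
    rw [hc] at h
    cases b with
    | true =>
      obtain ⟨hd, hd0⟩ := oddEdgeColor_eq_inr_true hn hc
      obtain ⟨he, he0⟩ := oddEdgeColor_eq_inr_true hn h.symm
      refine hde (eq_of_mem_range_of_castHom_eq hpn hs hd he ?_)
      have hde0 := hd0.trans he0.symm
      rwa [map_add, map_add, add_right_inj] at hde0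
    | false =>
      have hd0 := (oddEdgeColor_eq_inr_false hn hc).2
      have he0 := (oddEdgeColor_eq_inr_false hn h.symm).2
      exact hde (Units.ext (add_left_cancel (hd0.trans he0.symm)))

theorem oddEdgeColor_of_castHom_eq_zero (hn : Odd n) (hs_neg : ∀ x, s (-x) = -s x)
    {a : ZMod n} {e : (ZMod n)ˣ} (he : e ∈ Set.range s)
    (h : ZMod.castHom hpn (ZMod p) (2 * a + e) = 0) :
    oddEdgeColor hpn s a e = .inr true ∧ oddEdgeColor hpn s a (-e) = .inl (-e) := by
  have hpos : ZMod.castHom hpn (ZMod p) (cyclePosition a e) = 0 := by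
    rw [two_mul_add_eq_mul_cyclePosition hn, map_mul] at h
    exact (mul_eq_zero.1 h).resolve_left (ZMod.castHom_ne_zero_of_isUnit hpn
      ((ZMod.isUnit_two_of_odd hn).mul e.isUnit))
  have he' : -e ∈ Set.range s := (neg_mem_range_iff hs_neg).2 he
  simp only [oddEdgeColor, if_pos he, if_pos he', hpos, cyclePattern_zero, cyclePosition_neg hn,
    map_sub, map_one, sub_zero, cyclePattern_one (Fact.out : p.Prime).one_lt, and_self]

theorem oddVertexColor_eq_inl (hs : ∀ x, ZMod.castHom hpn (ZMod p) (s x) = x)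
    {a : ZMod n} {e : (ZMod n)ˣ} (h : oddVertexColor hpn s a = .inl e) :
    e ∈ Set.range s ∧ ZMod.castHom hpn (ZMod p) (2 * a + e) = 0 := by
  unfold oddVertexColor at h
  split_ifs at h with h0
  obtain rfl := Sum.inl_injective h
  refine ⟨⟨_, rfl⟩, ?_⟩
  rw [map_add, hs]
  simp

theorem oddVertexColor_eq_inr {a : ZMod n} {b : Bool} (h : oddVertexColor hpn s a = .inr b) :
    ZMod.castHom hpn (ZMod p) (2 * a) = 0 := by
  unfold oddVertexColor at h
  split_ifs at h with h0
  exact h0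

theorem oddVertexColor_add_ne (hn : Odd n) (hs : ∀ x, ZMod.castHom hpn (ZMod p) (s x) = x)
    (a : ZMod n) (d : (ZMod n)ˣ) : oddVertexColor hpn s a ≠ oddVertexColor hpn s (a + d) := by
  intro h
  apply ZMod.castHom_ne_zero_of_isUnit hpn ((ZMod.isUnit_two_of_odd hn).mul d.isUnit)
  have hshift (x : ZMod n) : 2 * (a + d) + x - (2 * a + x) = 2 * d := by ring
  cases hv : oddVertexColor hpn s a with
  | inl e =>
    rw [hv] at h
    rw [← hshift e, map_sub, (oddVertexColor_eq_inl hs hv).2, (oddVertexColor_eq_inl hs h.symm).2,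
      sub_zero]
  | inr b =>
    rw [hv] at h
    rw [← hshift 0, add_zero, add_zero, map_sub, oddVertexColor_eq_inr hv,
      oddVertexColor_eq_inr h.symm, sub_zero]

theorem oddEdgeColor_ne_oddVertexColor (hn : Odd n)
    (hs : ∀ x, ZMod.castHom hpn (ZMod p) (s x) = x) (hs_neg : ∀ x, s (-x) = -s x)
    (a : ZMod n) (d : (ZMod n)ˣ) : oddEdgeColor hpn s a d ≠ oddVertexColor hpn s a := by
  intro h
  cases hv : oddVertexColor hpn s a with
  | inl e =>
    rw [hv] at h
    obtain ⟨he, he0⟩ := oddVertexColor_eq_inl hs hv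
    obtain ⟨hbreak, hbreak_neg⟩ := oddEdgeColor_of_castHom_eq_zero hn hs_neg he he0
    rcases oddEdgeColor_eq_inl h with rfl | rfl
    · rw [hbreak] at h
      cases h
    · rw [neg_neg] at hbreak_neg
      rw [hbreak_neg] at h
      exact units_ne_neg_of_odd hpn hn d (Sum.inl_injective h)
  | inr b =>
    rw [hv] at h
    apply ZMod.castHom_ne_zero_of_isUnit hpn d.isUnit
    have h2a := oddVertexColor_eq_inr hv
    cases b with
    | true =>
      have hd0 := (oddEdgeColor_eq_inr_true hn h).2
      rwa [map_add, h2a, zero_add] at hd0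
    | false =>
      have hd0 := congrArg (ZMod.castHom hpn (ZMod p)) (oddEdgeColor_eq_inr_false hn h).2
      rwa [map_add, h2a, zero_add, map_zero] at hd0

end OddModulus

theorem ZMod.castHom_two_unit_eq_one {n : ℕ} (hn : 2 ∣ n) (d : (ZMod n)ˣ) :
    ZMod.castHom hn (ZMod 2) d = 1 := by
  have hu := d.isUnit.map (ZMod.castHom hn (ZMod 2))
  generalize ZMod.castHom hn (ZMod 2) d = x at hu ⊢
  fin_cases x
  · exact absurd hu not_isUnit_zero
  · rfl

theorem totalColorable_of_even {n : ℕ} (hn : Even n) (hn0 : n ≠ 0) :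
    TotalColorable (unitaryCayleyGraph n) (Nat.totient n + 2) := by
  have : NeZero n := ⟨hn0⟩
  have h2 : 2 ∣ n := hn.two_dvd
  have hπ (a : ZMod n) (d : (ZMod n)ˣ) :
      ZMod.castHom h2 (ZMod 2) (a + d) = ZMod.castHom h2 (ZMod 2) a + 1 := by
    rw [map_add, ZMod.castHom_two_unit_eq_one]
  refine totalColorable_unitaryCayleyGraph_of_stepColoring (C := (ZMod n)ˣ ⊕ ZMod 2)
    (by simp [ZMod.card_units_eq_totient]) (fun a => .inr (ZMod.castHom h2 (ZMod 2) a))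
    (fun a d => .inl (if ZMod.castHom h2 (ZMod 2) a = 0 then d else -d)) ?_ ?_ ?_ ?_
  · intro a d
    simp [hπ]
  · intro a d
    rw [hπ]
    rcases (by decide : ∀ x : ZMod 2, x = 0 ∨ x = 1) (ZMod.castHom h2 (ZMod 2) a) with h | h <;>
      simp [h, show (1 + 1 : ZMod 2) = 0 from rfl]
  · intro a d e h
    simp only [Sum.inl.injEq] at h
    split_ifs at h
    exacts [h, neg_injective h]
  · simp

theorem totalColorable_of_odd {n : ℕ} (hn : Odd n) (hn1 : n ≠ 1) :
    TotalColorable (unitaryCayleyGraph n) (Nat.totient n + 2) := by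
  have : NeZero n := ⟨hn.pos.ne'⟩
  obtain ⟨p, hp, hpn⟩ := Nat.exists_prime_and_dvd hn1
  have : Fact p.Prime := ⟨hp⟩
  obtain ⟨s, hs, hs_neg⟩ := exists_odd_section hpn (hn.of_dvd_nat hpn)
  exact totalColorable_unitaryCayleyGraph_of_stepColoring (by simp [ZMod.card_units_eq_totient])
    (oddVertexColor hpn s) (oddEdgeColor hpn s) (oddVertexColor_add_ne hn hs)
    (oddEdgeColor_add_neg hn hs_neg) (oddEdgeColor_injective hn hs hs_neg)
    (oddEdgeColor_ne_oddVertexColor hn hs hs_neg)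

/-- For every integer `n > 1`, the unitary Cayley graph `X_n` admits a proper
total coloring with `φ(n) + 2` colors (`X_n` is `φ(n)`-regular, so this is the
Total Coloring Conjecture for `X_n`). -/
theorem unitaryCayley_totalColorable (n : ℕ) (hn : 1 < n) :
    TotalColorable (unitaryCayleyGraph n) (Nat.totient n + 2) := by
  rcases Nat.even_or_odd n with h | h
  · exact totalColorable_of_even h (by omega)
  · exact totalColorable_of_odd h (by omega)
end

section
/- Every mock threshold graph G satisfies the Total Coloring Conjecture; that is, χ''(G) ≤ Δ(G) + 2. -/
/-- A graph `G` on `n` vertices is mock threshold if there is a vertex ordering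
`σ 0, σ 1, ..., σ (n-1)` such that for every `i`, the degree of `σ i` in the
subgraph induced by `{σ 0, ..., σ i}` is `0`, `1`, `i - 1`, or `i`
(0-indexed; i.e. `0`, `1`, `i - 2`, or `i - 1` with 1-indexed positions). -/
def MockThreshold {n : ℕ} (G : SimpleGraph (Fin n)) : Prop :=
  ∃ σ : Equiv.Perm (Fin n), ∀ i : Fin n,
    {j : Fin n | j < i ∧ G.Adj (σ i) (σ j)}.ncard = 0 ∨
    {j : Fin n | j < i ∧ G.Adj (σ i) (σ j)}.ncard = 1 ∨
    {j : Fin n | j < i ∧ G.Adj (σ i) (σ j)}.ncard = (i : ℕ) - 1 ∨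
    {j : Fin n | j < i ∧ G.Adj (σ i) (σ j)}.ncard = (i : ℕ)

/-!
Induct on the number `n` of vertices along the mock threshold ordering, allowing any number
`k ≥ Δ + 2` of colors. If some odd `m` satisfies `n ≤ m ≤ k`, then `G` sits inside `K_m`, which is
totally colored by `a ↦ 2a`, `ab ↦ a + b` on `ZMod m`. Otherwise `k ≤ n`, with `n` even if
`k = n`, and the last vertex has degree `0`, `1` or `n - 2`. A vertex of degree at most one is
deleted and greedily colored back. Degree `n - 2` forces `k = n` even and `Δ ≤ n - 2`, so the
complement of `G` has a spanning star forest. The complete graph on `n` vertices has an edge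
coloring with `n - 1` colors in which the star edges other than one edge `cs` get distinct colors;
every vertex except `c` and `s` takes the color of its star edge, a non-edge of `G`, and `c`, `s`
share the `n`-th color.
-/

namespace TotalColorable

variable {V W : Type*} {G : SimpleGraph V} {H : SimpleGraph W} {k : ℕ}

theorem mono {k' : ℕ} (h : TotalColorable G k) (hk : k ≤ k') : TotalColorable G k' := by
  obtain ⟨cv, ce, hv, hsymm, he, hve⟩ := h
  have hinj := Fin.castLE_injective hk
  exact ⟨fun v => Fin.castLE hk (cv v), fun u v => Fin.castLE hk (ce u v),
    fun u v huv => hinj.ne (hv u v huv), fun u v huv => congrArg _ (hsymm u v huv),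
    fun u v w huv huw hvw => hinj.ne (he u v w huv huw hvw),
    fun u v huv => ⟨hinj.ne (hve u v huv).1, hinj.ne (hve u v huv).2⟩⟩

theorem of_injective_hom (h : TotalColorable H k) (f : G →g H) (hf : Function.Injective f) :
    TotalColorable G k := by
  obtain ⟨cv, ce, hv, hsymm, he, hve⟩ := h
  exact ⟨fun v => cv (f v), fun u v => ce (f u) (f v),
    fun u v huv => hv _ _ (f.map_adj huv), fun u v huv => hsymm _ _ (f.map_adj huv),
    fun u v w huv huw hvw => he _ _ _ (f.map_adj huv) (f.map_adj huw) (hf.ne hvw),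
    fun u v huv => hve _ _ (f.map_adj huv)⟩

end TotalColorable

theorem ZMod.isUnit_two_of_odd_s3 {m : ℕ} (hm : Odd m) : IsUnit (2 : ZMod m) := by
  simpa using (ZMod.isUnit_iff_coprime 2 m).mpr (Nat.coprime_two_left.mpr hm)

theorem ZMod.natCast_ne_natCast_of_lt {M a b : ℕ} (hab : a < b) (hb : b < a + M) :
    (a : ZMod M) ≠ b := fun h =>
  hab.ne <| ((ZMod.natCast_eq_natCast_iff _ _ _).mp h).eq_of_abs_lt (by rw [abs_lt]; omega)

theorem totalColorable_top_zmod {m : ℕ} (hm : Odd m) :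
    TotalColorable (⊤ : SimpleGraph (ZMod m)) m := by
  have : NeZero m := ⟨hm.pos.ne'⟩
  have h2 := ZMod.isUnit_two_of_odd_s3 hm
  have he := (ZMod.finEquiv m).symm.injective
  refine ⟨fun a => (ZMod.finEquiv m).symm (2 * a), fun a b => (ZMod.finEquiv m).symm (a + b),
    fun a b hab h => hab (h2.mul_right_injective (he h)), fun a b _ => by simp only [add_comm],
    fun a b c _ _ hbc h => hbc (add_left_cancel (he h)), fun a b hab => ⟨?_, ?_⟩⟩
  · intro h
    have := he h
    rw [two_mul] at this
    exact hab (add_left_cancel this).symm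
  · intro h
    have := he h
    rw [two_mul] at this
    exact hab (add_right_cancel this)

theorem totalColorable_of_card_le_of_odd {V : Type*} [Fintype V] (G : SimpleGraph V) {m : ℕ}
    (hm : Odd m) (hV : Fintype.card V ≤ m) : TotalColorable G m := by
  have : NeZero m := ⟨hm.pos.ne'⟩
  obtain ⟨f⟩ : Nonempty (V ↪ ZMod m) := Function.Embedding.nonempty_of_card_le (by simpa using hV)
  exact (totalColorable_top_zmod hm).of_injective_hom ⟨f, fun h => f.injective.ne h.ne⟩ f.injective

theorem SimpleGraph.degree_comap_le {V W : Type*} [Fintype V] [Fintype W] (G : SimpleGraph V)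
    [DecidableRel G.Adj] {f : W → V} (hf : Function.Injective f) (w : W) :
    (G.comap f).degree w ≤ G.degree (f w) :=
  Finset.card_le_card_of_injOn f (fun x hx => by simpa using hx) hf.injOn

theorem Fin.exists_notMem_of_card_lt {k : ℕ} {s : Finset (Fin k)} (h : s.card < k) :
    ∃ c, c ∉ s := by
  obtain ⟨c, -, hc⟩ := Finset.exists_mem_notMem_of_card_lt_card
    (show s.card < (Finset.univ : Finset (Fin k)).card by rwa [Finset.card_univ, Fintype.card_fin])
  exact ⟨c, hc⟩

theorem SimpleGraph.eq_of_adj_of_degree_le_one {V : Type*} {G : SimpleGraph V} [Fintype V]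
    [DecidableRel G.Adj] {v x y : V} (hv : G.degree v ≤ 1) (hx : G.Adj v x) (hy : G.Adj v y) :
    x = y :=
  Finset.card_le_one.mp hv x (by simpa) y (by simpa)

/-- `cE` is to color the edge at the last vertex, `cW` the last vertex itself. -/
theorem exists_colors_of_degree_last_le_one {n k : ℕ} (G : SimpleGraph (Fin (n + 1)))
    [DecidableRel G.Adj] (hlast : G.degree (Fin.last n) ≤ 1) (hk : ∀ v, G.degree v + 2 ≤ k)
    (cv : Fin n → Fin k) (ce : Fin n → Fin n → Fin k) :
    ∃ cE cW : Fin k, ∀ u : Fin n, G.Adj (Fin.last n) u.castSucc →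
      cW ≠ cv u ∧ cE ≠ cv u ∧ cE ≠ cW ∧ ∀ y, (G.comap Fin.castSucc).Adj u y → cE ≠ ce u y := by
  set G' := G.comap Fin.castSucc
  by_cases hu : ∃ u : Fin n, G.Adj (Fin.last n) u.castSucc
  · obtain ⟨u, hu⟩ := hu
    have hdeg : G'.degree u + 2 ≤ k :=
      (Nat.add_le_add_right (G.degree_comap_le (Fin.castSucc_injective n) u) 2).trans (hk _)
    have hu0 : 0 < G.degree u.castSucc := G.degree_pos_iff_exists_adj _ |>.mpr ⟨_, hu.symm⟩
    obtain ⟨cE, hcE⟩ := Fin.exists_notMem_of_card_lt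
      (s := insert (cv u) ((G'.neighborFinset u).image (ce u))) <| by
        grw [Finset.card_insert_le, Finset.card_image_le]
        rw [SimpleGraph.card_neighborFinset_eq_degree]
        omega
    obtain ⟨cW, hcW⟩ := Fin.exists_notMem_of_card_lt (s := {cE, cv u}) <| by
      grw [Finset.card_le_two]
      have := hk u.castSucc
      omega
    simp only [Finset.mem_insert, Finset.mem_singleton, Finset.mem_image,
      SimpleGraph.mem_neighborFinset, not_or, not_exists, not_and] at hcE hcW
    refine ⟨cE, cW, fun u' hu' => ?_⟩
    obtain rfl : u' = u := Fin.castSucc_injective _ (G.eq_of_adj_of_degree_le_one hlast hu' hu)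
    exact ⟨hcW.2, hcE.1, Ne.symm hcW.1, fun y hy h => hcE.2 y hy h.symm⟩
  · simp only [not_exists] at hu
    have hk0 : 0 < k := (Nat.succ_pos _).trans_le (hk 0)
    exact ⟨⟨0, hk0⟩, ⟨0, hk0⟩, fun u h => absurd h (hu u)⟩

theorem totalColorable_of_degree_last_le_one {n k : ℕ} (G : SimpleGraph (Fin (n + 1)))
    [DecidableRel G.Adj] (hlast : G.degree (Fin.last n) ≤ 1) (hk : ∀ v, G.degree v + 2 ≤ k)
    (h : TotalColorable (G.comap Fin.castSucc) k) : TotalColorable G k := by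
  obtain ⟨cv, ce, hv, hsymm, he, hve⟩ := h
  obtain ⟨cE, cW, hcol⟩ := exists_colors_of_degree_last_le_one G hlast hk cv ce
  refine ⟨Fin.lastCases cW cv, Fin.lastCases (fun _ => cE) (fun x => Fin.lastCases cE (ce x)),
    ?_, ?_, ?_, ?_⟩
  · intro x y hxy
    induction x using Fin.lastCases <;> induction y using Fin.lastCases <;>
      simp only [Fin.lastCases_last, Fin.lastCases_castSucc]
    exacts [(G.irrefl hxy).elim, (hcol _ hxy).1, (hcol _ hxy.symm).1.symm, hv _ _ hxy]
  · intro x y hxy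
    induction x using Fin.lastCases <;> induction y using Fin.lastCases <;>
      simp only [Fin.lastCases_last, Fin.lastCases_castSucc]
    exact hsymm _ _ hxy
  · intro x y z hxy hxz hyz
    induction x using Fin.lastCases <;> induction y using Fin.lastCases <;>
      induction z using Fin.lastCases <;>
      simp only [Fin.lastCases_last, Fin.lastCases_castSucc]
    exacts [(G.irrefl hxy).elim, (G.irrefl hxy).elim, (G.irrefl hxz).elim,
      absurd (G.eq_of_adj_of_degree_le_one hlast hxy hxz) hyz, absurd rfl hyz,
      (hcol _ hxy.symm).2.2.2 _ hxz,
      ((hcol _ hxz.symm).2.2.2 _ hxy).symm, he _ _ _ hxy hxz fun h => hyz (congrArg _ h)]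
  · intro x y hxy
    induction x using Fin.lastCases <;> induction y using Fin.lastCases <;>
      simp only [Fin.lastCases_last, Fin.lastCases_castSucc]
    exacts [(G.irrefl hxy).elim, ⟨(hcol _ hxy).2.2.1, (hcol _ hxy).2.1⟩,
      ⟨(hcol _ hxy.symm).2.1, (hcol _ hxy.symm).2.2.1⟩, hve _ _ hxy]

namespace SimpleGraph

variable {V : Type*}

/-- A maximal matching of `H`, given as the involution swapping matched vertices. -/
theorem exists_involutive_maximal_matching [Fintype V] (H : SimpleGraph V) :
    ∃ μ : V → V, Function.Involutive μ ∧ (∀ x, μ x ≠ x → H.Adj x (μ x)) ∧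
      ∀ x y, μ x = x → μ y = y → ¬H.Adj x y := by
  classical
  let moved (μ : V → V) : Finset V := {x | μ x ≠ x}
  obtain ⟨μ, hμ, hmax⟩ := Finset.exists_max_image
    {μ : V → V | Function.Involutive μ ∧ ∀ x, μ x ≠ x → H.Adj x (μ x)} (fun μ => (moved μ).card)
    ⟨id, Finset.mem_filter.mpr ⟨Finset.mem_univ _, fun _ => rfl, fun _ h => (h rfl).elim⟩⟩
  simp only [Finset.mem_filter, Finset.mem_univ, true_and] at hμ hmax
  obtain ⟨hinv, hadj⟩ := hμ
  refine ⟨μ, hinv, hadj, fun a b ha hb hab => ?_⟩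
  have hab' : a ≠ b := hab.ne
  let μ' : V → V := fun x => if x = a then b else if x = b then a else μ x
  have hμ' : ∀ x, x ≠ a → x ≠ b → μ' x = μ x := fun x hxa hxb => by simp [μ', hxa, hxb]
  have hμa : ∀ x, μ x = a → x = a := fun x hx => by rw [← hinv x, hx, ha]
  have hμb : ∀ x, μ x = b → x = b := fun x hx => by rw [← hinv x, hx, hb]
  have hinv' : Function.Involutive μ' := by
    intro x
    by_cases hxa : x = a
    · simp [μ', hxa, hab'.symm]
    by_cases hxb : x = b
    · simp [μ', hxb, hab'.symm]
    rw [hμ' x hxa hxb, hμ' _ (mt (hμa x) hxa) (mt (hμb x) hxb), hinv x]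
  have hadj' : ∀ x, μ' x ≠ x → H.Adj x (μ' x) := by
    intro x hx
    by_cases hxa : x = a
    · simpa [μ', hxa] using hab
    by_cases hxb : x = b
    · simpa [μ', hxb, hab'.symm] using hab.symm
    rw [hμ' x hxa hxb] at hx ⊢
    exact hadj x hx
  have hlt : (moved μ).card < (moved μ').card := by
    refine Finset.card_lt_card ⟨fun x hx => ?_, fun hsub => ?_⟩
    · simp only [moved, Finset.mem_filter, Finset.mem_univ, true_and] at hx ⊢
      have hxa : x ≠ a := by rintro rfl; exact hx ha
      have hxb : x ≠ b := by rintro rfl; exact hx hb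
      rwa [hμ' x hxa hxb]
    · have : a ∈ moved μ' := by simpa [moved, μ'] using hab'.symm
      simpa [moved, ha] using hsub this
  exact (hmax μ' ⟨hinv', hadj'⟩).not_gt hlt

/-- Centers are the fixed points of `center`; every other vertex `x` is a leaf joined to
`center x`, and `leaf c` is a leaf of the center `c`. -/
structure SpanningStarForest (H : SimpleGraph V) where
  center : V → V
  leaf : V → V
  center_center (x : V) : center (center x) = center x
  adj_center (x : V) : center x ≠ x → H.Adj x (center x)
  center_leaf (c : V) : center c = c → center (leaf c) = c
  leaf_ne (c : V) : center c = c → leaf c ≠ c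

/-- Unmatched vertices `u` become leaves of `φ u`; of a matched pair, a vertex that received such
a leaf is a center, and if neither did, the smaller one is. -/
theorem exists_center_of_matching [LinearOrder V] (H : SimpleGraph V) {μ φ : V → V}
    (hinv : Function.Involutive μ)
    (hμ : ∀ x, μ x ≠ x → H.Adj x (μ x)) (hφ : ∀ x, H.Adj x (φ x))
    (hφμ : ∀ u, μ u = u → μ (φ u) ≠ φ u) :
    ∃ center : V → V, (∀ x, center (center x) = center x) ∧
      (∀ x, center x ≠ x → H.Adj x (center x)) ∧ ∀ c, center c = c → ∃ l, l ≠ c ∧ center l = c := by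
  classical
  let HasLeaf (x : V) : Prop := ∃ u, μ u = u ∧ φ u = x
  let IsCenter (x : V) : Prop := HasLeaf x ∨ ¬HasLeaf (μ x) ∧ x < μ x
  let center (x : V) : V := if μ x = x then φ x else if IsCenter x then x else μ x
  have center_unmatched : ∀ x, μ x = x → center x = φ x := fun x hx => by simp [center, hx]
  have center_of_isCenter : ∀ x, μ x ≠ x → IsCenter x → center x = x := fun x hx hc => by
    simp only [center, if_neg hx, if_pos hc]
  have center_of_not_isCenter : ∀ x, μ x ≠ x → ¬IsCenter x → center x = μ x := fun x hx hc => by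
    simp only [center, if_neg hx, if_neg hc]
  have hμμ : ∀ x, μ x ≠ x → μ (μ x) ≠ μ x := fun x hx => by rw [hinv x]; exact Ne.symm hx
  refine ⟨center, fun x => ?_, fun x hx => ?_, fun c hc => ?_⟩
  · by_cases hm : μ x = x
    · rw [center_unmatched x hm]
      exact center_of_isCenter _ (hφμ x hm) (Or.inl ⟨x, hm, rfl⟩)
    by_cases hc : IsCenter x
    · rw [center_of_isCenter x hm hc, center_of_isCenter x hm hc]
    · rw [center_of_not_isCenter x hm hc]
      refine center_of_isCenter _ (hμμ x hm) ?_
      simp only [IsCenter, hinv x, not_or, not_and, not_lt] at hc ⊢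
      by_cases hl : HasLeaf (μ x)
      · exact Or.inl hl
      · exact Or.inr ⟨hc.1, lt_of_le_of_ne (hc.2 hl) hm⟩
  · by_cases hm : μ x = x
    · rw [center_unmatched x hm]
      exact hφ x
    by_cases hc : IsCenter x
    · exact absurd (center_of_isCenter x hm hc) hx
    · rw [center_of_not_isCenter x hm hc]
      exact hμ x hm
  · have hm : μ c ≠ c := fun hm => (hφ c).ne' ((center_unmatched c hm).symm.trans hc)
    have hcc : IsCenter c := by
      by_contra hcc
      exact hm ((center_of_not_isCenter c hm hcc).symm.trans hc)
    by_cases hl : HasLeaf c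
    · obtain ⟨u, hu, hφu⟩ := hl
      exact ⟨u, fun h => hm (h ▸ hu), (center_unmatched u hu).trans hφu⟩
    · have hμc : ¬HasLeaf (μ c) ∧ c < μ c := hcc.resolve_left hl
      have : ¬IsCenter (μ c) := by
        simp only [IsCenter, hinv c, not_or, not_and, not_lt]
        exact ⟨hμc.1, fun _ => hμc.2.le⟩
      exact ⟨μ c, hm, (center_of_not_isCenter _ (hμμ c hm) this).trans (hinv c)⟩

theorem nonempty_spanningStarForest [Fintype V] [LinearOrder V] (H : SimpleGraph V)
    (h : ∀ x, ∃ y, H.Adj x y) : Nonempty H.SpanningStarForest := by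
  classical
  obtain ⟨μ, hinv, hμ, hmax⟩ := H.exists_involutive_maximal_matching
  choose φ hφ using h
  obtain ⟨center, hcenter, hadj, hleaf⟩ := H.exists_center_of_matching hinv hμ hφ
    fun u hu h => hmax u _ hu h (hφ u)
  choose! leaf hleaf_ne hcenter_leaf using hleaf
  exact ⟨⟨center, leaf, hcenter, hadj, hcenter_leaf, hleaf_ne⟩⟩

end SimpleGraph

/-- For odd `M` this is a proper edge coloring of the complete graph on `Option (ZMod M)`:
`none` is the vertex added to `K_M`, and `2 * a` is the one color missing at `a` in `K_M`. -/
def completeEdgeColor {M : ℕ} : Option (ZMod M) → Option (ZMod M) → ZMod M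
  | some a, some b => a + b
  | some a, none => 2 * a
  | none, some b => 2 * b
  | none, none => 0

theorem completeEdgeColor_comm {M : ℕ} (x y : Option (ZMod M)) :
    completeEdgeColor x y = completeEdgeColor y x := by
  cases x <;> cases y <;> simp [completeEdgeColor, add_comm]

theorem completeEdgeColor_injective {M : ℕ} (hM : Odd M) {x y z : Option (ZMod M)}
    (hxy : x ≠ y) (hxz : x ≠ z) (h : completeEdgeColor x y = completeEdgeColor x z) : y = z := by
  have h2 := ZMod.isUnit_two_of_odd_s3 hM
  rcases x with _ | a <;> rcases y with _ | b <;> rcases z with _ | c <;>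
    simp only [completeEdgeColor, ne_eq, Option.some.injEq, reduceCtorEq, not_true_eq_false]
      at h hxy hxz ⊢
  · exact h2.mul_left_cancel h
  · exact hxz (add_left_cancel ((two_mul a).symm.trans h))
  · exact hxy (add_left_cancel (h.trans (two_mul a))).symm
  · exact add_left_cancel h

/-- The vertices of `T` share one extra color; every other vertex `x` takes the color of the
non-edge from `x` to `mate x`, which is missing at `x` in `G`. -/
theorem totalColorable_succ_of_edgeColoring {V : Type*} (G : SimpleGraph V) {k : ℕ}
    (ce : V → V → Fin k) (ce_comm : ∀ x y, ce x y = ce y x)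
    (ce_ne : ∀ x y z, x ≠ y → x ≠ z → y ≠ z → ce x y ≠ ce x z)
    (T : Set V) (hT : ∀ x ∈ T, ∀ y ∈ T, ¬G.Adj x y)
    (mate : V → V) (hmate : ∀ x, Gᶜ.Adj x (mate x))
    (hcol : ∀ x y, x ∉ T → y ∉ T → G.Adj x y → ce x (mate x) ≠ ce y (mate y)) :
    TotalColorable G (k + 1) := by
  classical
  have hne_mate : ∀ x y, G.Adj x y → ce x y ≠ ce x (mate x) := fun x y hxy =>
    ce_ne x y (mate x) hxy.ne (hmate x).ne fun h => (hmate x).2 (h ▸ hxy)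
  refine ⟨fun x => if x ∈ T then Fin.last k else (ce x (mate x)).castSucc,
    fun x y => (ce x y).castSucc, fun x y hxy => ?_, fun x y _ => congrArg _ (ce_comm x y),
    fun x y z hxy hxz hyz => (Fin.castSucc_injective k).ne (ce_ne x y z hxy.ne hxz.ne hyz),
    fun x y hxy => ⟨?_, ?_⟩⟩
  · by_cases hx : x ∈ T <;> by_cases hy : y ∈ T <;> simp only [hx, hy, if_true, if_false]
    · exact absurd hxy (hT x hx y hy)
    · exact (Fin.castSucc_ne_last _).symm
    · exact Fin.castSucc_ne_last _
    · exact (Fin.castSucc_injective k).ne (hcol x y hx hy hxy)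
  · beta_reduce
    split_ifs
    · exact Fin.castSucc_ne_last _
    · exact (Fin.castSucc_injective k).ne (hne_mate x y hxy)
  · beta_reduce
    split_ifs
    · exact Fin.castSucc_ne_last _
    · rw [ce_comm]
      exact (Fin.castSucc_injective k).ne (hne_mate y x hxy.symm)

section keyRank

variable {α K : Type*} [LinearOrder K]

def keyRank (D : Finset α) (key : α → K) (x : α) : ℕ := (D.filter fun y => key y < key x).card

variable {D C : Finset α} {key : α → K} {x y : α}

theorem keyRank_le_keyRank (h : key x ≤ key y) : keyRank D key x ≤ keyRank D key y :=
  Finset.card_le_card fun _ hz => by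
    rw [Finset.mem_filter] at hz ⊢
    exact ⟨hz.1, hz.2.trans_le h⟩

theorem keyRank_lt_keyRank (hx : x ∈ D) (h : key x < key y) : keyRank D key x < keyRank D key y :=
  Finset.card_lt_card ⟨fun _ hz => by
    rw [Finset.mem_filter] at hz ⊢
    exact ⟨hz.1, hz.2.trans h⟩, fun hsub => (hsub (Finset.mem_filter.mpr ⟨hx, h⟩) |>
      Finset.mem_filter.mp).2.false⟩

theorem keyRank_lt_card (hx : x ∈ C) (hC : ∀ y ∈ D, key y < key x → y ∈ C) :
    keyRank D key x < C.card :=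
  Finset.card_lt_card ⟨fun y hy => hC y (Finset.mem_filter.mp hy).1 (Finset.mem_filter.mp hy).2,
    fun hsub => (Finset.mem_filter.mp (hsub hx)).2.false⟩

theorem card_le_keyRank (hC : C ⊆ D) (h : ∀ y ∈ C, key y < key x) : C.card ≤ keyRank D key x :=
  Finset.card_le_card fun y hy => Finset.mem_filter.mpr ⟨hC hy, h y hy⟩

end keyRank

namespace SimpleGraph.SpanningStarForest

variable {V : Type*} {H : SimpleGraph V} (F : H.SpanningStarForest)

section mate

variable [DecidableEq V]

def mate (x : V) : V := if F.center x = x then F.leaf x else F.center x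

def leafOf (x : V) : V := if F.center x = x then F.leaf x else x

theorem adj_mate (x : V) : H.Adj x (F.mate x) := by
  unfold mate
  split_ifs with hx
  · have := F.adj_center _ ((F.center_leaf x hx).trans_ne (F.leaf_ne x hx).symm)
    rwa [F.center_leaf x hx, H.adj_comm] at this
  · exact F.adj_center x hx

theorem center_leafOf_ne (x : V) : F.center (F.leafOf x) ≠ F.leafOf x := by
  unfold leafOf
  split_ifs with hx
  · rw [F.center_leaf x hx]
    exact (F.leaf_ne x hx).symm
  · exact hx

theorem apply_add_apply_mate {β : Type*} [AddCommMagma β] (p : V → β) (x : V) :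
    p x + p (F.mate x) = p (F.leafOf x) + p (F.center (F.leafOf x)) := by
  unfold mate leafOf
  split_ifs with hx
  · rw [F.center_leaf x hx, add_comm]
  · rfl

theorem eq_or_eq_mate_of_leafOf_eq {x y : V} (h : F.leafOf x = F.leafOf y) :
    y = x ∨ y = F.mate x := by
  unfold leafOf at h
  unfold mate
  split_ifs at h ⊢ with hx hy hy
  · left
    rw [← F.center_leaf x hx, ← F.center_leaf y hy, h]
  · exact Or.inr h.symm
  · right
    rw [← F.center_leaf y hy, h]
  · exact Or.inl h.symm

theorem mate_ne_leaf {c x : V} (hc : F.center c = c) (hxc : x ≠ c) : F.mate x ≠ F.leaf c := by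
  unfold mate
  split_ifs with hx
  · exact fun h => hxc (by rw [← F.center_leaf x hx, h, F.center_leaf c hc])
  · intro h
    apply F.leaf_ne c hc
    rw [← h, ← F.center_center x, h, F.center_leaf c hc]

theorem leafOf_ne_leaf {c x : V} (hc : F.center c = c) (hxc : x ≠ c) (hxs : x ≠ F.leaf c) :
    F.leafOf x ≠ F.leaf c := by
  unfold leafOf
  split_ifs with hx
  · exact fun h => hxc (by rw [← F.center_leaf x hx, h, F.center_leaf c hc])
  · exact hxs

end mate

section key

variable [LinearOrder V]

/-- Centers come first, then the leaves grouped by their centers. -/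
def key (x : V) : Bool ×ₗ (V ×ₗ V) := toLex (decide (F.center x ≠ x), toLex (F.center x, x))

theorem key_injective : Function.Injective F.key := fun x y h => by
  simpa [key] using congrArg (fun p => (ofLex (ofLex p).2).2) h

theorem key_lt_key_of_center {c l : V} (hc : F.center c = c) (hl : F.center l ≠ l) :
    F.key c < F.key l := by
  simp [key, Prod.Lex.toLex_lt_toLex, hc, hl]

theorem center_eq_of_key_lt {c x : V} (hc : F.center c = c) (h : F.key x < F.key c) :
    F.center x = x := by
  by_contra hx
  exact (F.key_lt_key_of_center hc hx).not_gt h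

theorem key_center_le_key_center {l l' : V} (hl : F.center l ≠ l) (hl' : F.center l' ≠ l')
    (h : F.key l < F.key l') : F.key (F.center l) ≤ F.key (F.center l') := by
  simp only [key, Prod.Lex.toLex_lt_toLex, Prod.Lex.toLex_le_toLex, hl, hl', F.center_center,
    ne_eq, not_true_eq_false, decide_false, lt_self_iff_false, true_and, false_or] at h ⊢
  exact h.imp_right fun h => ⟨h.1, h.1.le⟩

end key

section coloring

variable [Fintype V] [LinearOrder V]

def rank (s x : V) : ℕ := keyRank (Finset.univ.erase s) F.key x

theorem rank_lt {M : ℕ} (hV : Fintype.card V = M + 1) {s x : V} (hx : x ≠ s) :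
    F.rank s x < M := by
  have := keyRank_lt_card (D := Finset.univ.erase s) (key := F.key)
    (Finset.mem_erase.mpr ⟨hx, Finset.mem_univ x⟩) fun y hy _ => hy
  rwa [Finset.card_erase_of_mem (Finset.mem_univ s), Finset.card_univ, hV, Nat.add_sub_cancel]
    at this

theorem natCast_rank_ne {M : ℕ} (hV : Fintype.card V = M + 1) {s x y : V} (hx : x ≠ s)
    (hy : y ≠ s) (hxy : x ≠ y) : (F.rank s x : ZMod M) ≠ F.rank s y := by
  wlog h : F.key x < F.key y generalizing x y
  · exact (this hy hx hxy.symm (lt_of_le_of_ne (not_lt.mp h) (F.key_injective.ne hxy.symm))).symm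
  have hlt : F.rank s x < F.rank s y :=
    keyRank_lt_keyRank (Finset.mem_erase.mpr ⟨hx, Finset.mem_univ x⟩) h
  exact ZMod.natCast_ne_natCast_of_lt hlt (by have := F.rank_lt hV hy; omega)

def label (M : ℕ) (s x : V) : Option (ZMod M) := if x = s then none else some (F.rank s x)

theorem label_injective {M : ℕ} (hV : Fintype.card V = M + 1) (s : V) :
    Function.Injective (F.label M s) := by
  intro x y h
  by_cases hx : x = s <;> by_cases hy : y = s <;>
    simp only [label, hx, hy, if_true, if_false, reduceCtorEq, Option.some.injEq] at h
  · exact hx.trans hy.symm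
  · by_contra hxy
    exact F.natCast_rank_ne hV hx hy hxy h

/-- The sums increase along `F.key` and, since the centers come first, they range over fewer
than `M` consecutive values. -/
theorem rank_add_rank_center_ne {M : ℕ} (hV : Fintype.card V = M + 1) {s l l' : V}
    (hs : F.center s ≠ s) (hl : F.center l ≠ l) (hl' : F.center l' ≠ l') (hls : l ≠ s)
    (hl's : l' ≠ s) (hll' : l ≠ l') :
    (F.rank s l : ZMod M) + F.rank s (F.center l) ≠ F.rank s l' + F.rank s (F.center l') := by
  wlog h : F.key l < F.key l' generalizing l l'
  · exact (this hl' hl hl's hls hll'.symm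
      (lt_of_le_of_ne (not_lt.mp h) (F.key_injective.ne hll'.symm))).symm
  let C : Finset V := {c | F.center c = c}
  have hCD : C ⊆ Finset.univ.erase s := fun c hc =>
    Finset.mem_erase.mpr ⟨fun h => hs (h ▸ (Finset.mem_filter.mp hc).2), Finset.mem_univ c⟩
  have h1 : F.rank s l < F.rank s l' :=
    keyRank_lt_keyRank (Finset.mem_erase.mpr ⟨hls, Finset.mem_univ l⟩) h
  have h2 : F.rank s (F.center l) ≤ F.rank s (F.center l') :=
    keyRank_le_keyRank (F.key_center_le_key_center hl hl' h)
  have h3 : F.rank s (F.center l') < C.card :=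
    keyRank_lt_card (by simp [C, F.center_center]) fun y _ hy => by
      simpa [C] using F.center_eq_of_key_lt (F.center_center l') hy
  have h4 : C.card ≤ F.rank s l :=
    card_le_keyRank hCD fun c hc => F.key_lt_key_of_center (by simpa [C] using hc) hl
  have h5 := F.rank_lt hV hl's
  exact_mod_cast ZMod.natCast_ne_natCast_of_lt (M := M) (by omega : _ < _) (by omega)

end coloring

end SimpleGraph.SpanningStarForest

/-- The edges are colored by `completeEdgeColor` through `F.label`; a center `c` and its leaf
`s = F.leaf c` share the extra color. -/
theorem SimpleGraph.SpanningStarForest.totalColorable {V : Type*} [Fintype V] [LinearOrder V]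
    {G : SimpleGraph V} (F : Gᶜ.SpanningStarForest) {M : ℕ} (hM : Odd M)
    (hV : Fintype.card V = M + 1) : TotalColorable G (M + 1) := by
  have : NeZero M := ⟨hM.pos.ne'⟩
  obtain ⟨v₀⟩ : Nonempty V := Fintype.card_pos_iff.mp (by omega)
  set c := F.center v₀
  set s := F.leaf c
  have hc : F.center c = c := F.center_center v₀
  have hsc : F.center s = c := F.center_leaf c hc
  have hs : F.center s ≠ s := hsc.trans_ne (F.leaf_ne c hc).symm
  have hℓ := F.label_injective hV s
  have hcolor : ∀ x, x ≠ c → x ≠ s → completeEdgeColor (F.label M s x) (F.label M s (F.mate x)) =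
      F.rank s (F.leafOf x) + F.rank s (F.center (F.leafOf x)) := by
    intro x hxc hxs
    have hm : F.mate x ≠ s := F.mate_ne_leaf hc hxc
    simp only [SpanningStarForest.label, hxs, hm, if_false, completeEdgeColor]
    exact F.apply_add_apply_mate (fun y => (F.rank s y : ZMod M)) x
  have hcs : ¬G.Adj c s := fun h => (F.adj_center s hs).2 (hsc ▸ h.symm)
  refine totalColorable_succ_of_edgeColoring G
    (fun x y => (ZMod.finEquiv M).symm (completeEdgeColor (F.label M s x) (F.label M s y)))
    (fun x y => by rw [completeEdgeColor_comm])
    (fun x y z hxy hxz hyz h => hyz (hℓ (completeEdgeColor_injective hM (hℓ.ne hxy) (hℓ.ne hxz)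
      ((ZMod.finEquiv M).symm.injective h))))
    {c, s} ?_ F.mate F.adj_mate ?_
  · simp only [Set.mem_insert_iff, Set.mem_singleton_iff]
    rintro x (rfl | rfl) y (rfl | rfl)
    exacts [G.irrefl, hcs, fun h => hcs h.symm, G.irrefl]
  · intro x y hx hy hxy h
    simp only [Set.mem_insert_iff, Set.mem_singleton_iff, not_or] at hx hy
    have h' := (ZMod.finEquiv M).symm.injective h
    rw [hcolor x hx.1 hx.2, hcolor y hy.1 hy.2] at h'
    by_cases hleaf : F.leafOf x = F.leafOf y
    · rcases F.eq_or_eq_mate_of_leafOf_eq hleaf with rfl | rfl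
      · exact G.irrefl hxy
      · exact (F.adj_mate x).2 hxy
    · exact F.rank_add_rank_center_ne hV hs (F.center_leafOf_ne x) (F.center_leafOf_ne y)
        (F.leafOf_ne_leaf hc hx.1 hx.2) (F.leafOf_ne_leaf hc hy.1 hy.2) hleaf h'

theorem totalColorable_of_odd_of_card_eq_succ {V : Type*} [Fintype V] [LinearOrder V]
    (G : SimpleGraph V) [DecidableRel G.Adj] {M : ℕ} (hM : Odd M) (hV : Fintype.card V = M + 1)
    (hdeg : ∀ v, G.degree v + 2 ≤ M + 1) : TotalColorable G (M + 1) := by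
  have hcompl : ∀ x, ∃ y, Gᶜ.Adj x y := fun x => by
    rw [← Gᶜ.degree_pos_iff_exists_adj, SimpleGraph.degree_compl]
    have := hdeg x
    omega
  obtain ⟨F⟩ := Gᶜ.nonempty_spanningStarForest hcompl
  exact F.totalColorable hM hV

/-- The identity ordering of `Fin n` witnesses that `G` is mock threshold. -/
def MockThresholdOrdered {n : ℕ} (G : SimpleGraph (Fin n)) : Prop :=
  ∀ i : Fin n,
    {j : Fin n | j < i ∧ G.Adj i j}.ncard = 0 ∨
    {j : Fin n | j < i ∧ G.Adj i j}.ncard = 1 ∨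
    {j : Fin n | j < i ∧ G.Adj i j}.ncard = (i : ℕ) - 1 ∨
    {j : Fin n | j < i ∧ G.Adj i j}.ncard = (i : ℕ)

theorem ncard_adj_lt_last {n : ℕ} (G : SimpleGraph (Fin (n + 1))) [DecidableRel G.Adj] :
    {j | j < Fin.last n ∧ G.Adj (Fin.last n) j}.ncard = G.degree (Fin.last n) := by
  rw [← SimpleGraph.card_neighborFinset_eq_degree, ← Set.ncard_coe_finset]
  congr 1
  ext j
  simpa using fun h => Fin.lt_last_iff_ne_last.mpr (G.ne_of_adj h).symm

theorem ncard_adj_lt_castSucc {n : ℕ} (G : SimpleGraph (Fin (n + 1))) (i : Fin n) :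
    {j | j < i.castSucc ∧ G.Adj i.castSucc j}.ncard =
      {j | j < i ∧ (G.comap Fin.castSucc).Adj i j}.ncard := by
  rw [← Set.ncard_image_of_injective _ (Fin.castSucc_injective n)]
  congr 1
  ext j
  cases j using Fin.lastCases <;> simp [(Fin.castSucc_lt_last i).not_gt]

theorem MockThresholdOrdered.comap_castSucc {n : ℕ} {G : SimpleGraph (Fin (n + 1))}
    (hG : MockThresholdOrdered G) : MockThresholdOrdered (G.comap Fin.castSucc) := fun i => by
  simpa only [ncard_adj_lt_castSucc, Fin.val_castSucc] using hG i.castSucc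

theorem MockThresholdOrdered.totalColorable {n : ℕ} {G : SimpleGraph (Fin n)} [DecidableRel G.Adj]
    (hG : MockThresholdOrdered G) {k : ℕ} (hk : ∀ v, G.degree v + 2 ≤ k) : TotalColorable G k := by
  induction n generalizing k with
  | zero => exact ⟨finZeroElim, finZeroElim, finZeroElim, finZeroElim, finZeroElim, finZeroElim⟩
  | succ n ih =>
    by_cases hhost : ∃ m, Odd m ∧ n + 1 ≤ m ∧ m ≤ k
    · obtain ⟨m, hm, hnm, hmk⟩ := hhost
      exact (totalColorable_of_card_le_of_odd G hm (by simpa using hnm)).mono hmk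
    have hkn : k ≤ n + 1 := by
      by_contra! h
      rcases Nat.even_or_odd (n + 1) with he | ho
      · exact hhost ⟨n + 2, he.add_one, by omega, by omega⟩
      · exact hhost ⟨n + 1, ho, le_rfl, by omega⟩
    have hstrip : G.degree (Fin.last n) ≤ 1 → TotalColorable G k := fun hlast =>
      totalColorable_of_degree_last_le_one G hlast hk <| ih hG.comap_castSucc fun v =>
        (Nat.add_le_add_right (G.degree_comap_le (Fin.castSucc_injective n) v) 2).trans (hk _)
    have hlast := hk (Fin.last n)
    rcases hG (Fin.last n) with h | h | h | h <;>
      simp only [ncard_adj_lt_last, Fin.val_last] at h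
    · exact hstrip (by omega)
    · exact hstrip h.le
    · by_cases hn : n ≤ 2
      · exact hstrip (by omega)
      obtain rfl : k = n + 1 := by omega
      have hodd : Odd n := by
        by_contra heven
        exact hhost ⟨n + 1, (Nat.not_odd_iff_even.mp heven).add_one, le_rfl, le_rfl⟩
      exact totalColorable_of_odd_of_card_eq_succ G hodd (Fintype.card_fin _) hk
    · omega

/-- Every mock threshold graph `G` satisfies the Total Coloring Conjecture:
`χ''(G) ≤ Δ(G) + 2`. -/
theorem mockThreshold_tcc {n : ℕ} (G : SimpleGraph (Fin n))
    [DecidableRel G.Adj] (hG : MockThreshold G) :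
    TotalColorable G (G.maxDegree + 2) := by
  obtain ⟨σ, hσ⟩ := hG
  have hcol : TotalColorable (G.comap σ) (G.maxDegree + 2) :=
    MockThresholdOrdered.totalColorable (G := G.comap σ) hσ fun v => Nat.add_le_add_right
      ((G.degree_comap_le σ.injective v).trans (G.degree_le_maxDegree _)) 2
  exact hcol.of_injective_hom ⟨σ.symm, by simp⟩ σ.symm.injective
end

section
/- Let n be an even positive integer, let [n]_0 = {0, 1, ..., n−1}, and for k ∈ [n]_0 let τ_k be the transposition of k and n−1 on [n]_0. Define c_n(i, j) = (τ_i(j) + τ_j(i) + 2) mod (n+1) for distinct i, j ∈ [n]_0, and c_n(i) = i for each vertex i ∈ [n]_0. Then c_n is a proper total coloring of the complete graph K_n using the n+1 colors {0, 1, ..., n}, and moreover at each vertex k ∈ [n]_0 exactly the two colors k and (k+1) mod n are missing from the edges incident with k. -/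
/-- `τ_k`, the transposition of `k` and `n - 1` on `[n]_0 = {0, 1, ..., n-1}`. -/
def tauPerm (n : ℕ) (hn : 0 < n) (k : Fin n) : Equiv.Perm (Fin n) :=
  Equiv.swap k ⟨n - 1, Nat.sub_lt hn Nat.one_pos⟩

/-- The edge coloring `c_n(i, j) = (τ_i(j) + τ_j(i) + 2) mod (n + 1)`. -/
def cEdge (n : ℕ) (hn : 0 < n) (i j : Fin n) : Fin (n + 1) :=
  ⟨((tauPerm n hn i j : ℕ) + (tauPerm n hn j i : ℕ) + 2) % (n + 1),
    Nat.mod_lt _ (Nat.succ_pos n)⟩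

/-- The vertex coloring `c_n(i) = i`. -/
def cVert (n : ℕ) (i : Fin n) : Fin (n + 1) := i.castSucc

/-!
Read the colours in `ZMod (n + 1)`. At a vertex `k ≠ n - 1` the edge `kj` gets colour
`k + τ_k(j) + 2`, and `τ_k` maps the other vertices bijectively onto `{0, …, n - 2}`, so these
colours are distinct and avoid `k` and `k + 1`. At `k = n - 1` the edge `kj` gets colour `2j + 2`
with `j ≤ n - 2`; since `n + 1` is odd, `2` is a unit, so these colours are distinct and avoid
`(k + 1) mod n = 0` and `k ≡ -2`. In both cases `n - 1` distinct colours avoid two of the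
`n + 1` colours, so by counting they are exactly the other `n - 1`.
-/

open Finset

theorem Finset.mem_image_of_injOn_of_card_add_eq {α β : Type*} [DecidableEq β] [Fintype β]
    {f : α → β} {t : Finset α} {s : Finset β} (hf : Set.InjOn f t) (hfs : ∀ a ∈ t, f a ∉ s)
    (hcard : #t + #s = Fintype.card β) {b : β} (hb : b ∉ s) : b ∈ t.image f := by
  have hdisj : Disjoint (t.image f) s := by
    simpa only [disjoint_left, mem_image, forall_exists_index, and_imp,
      forall_apply_eq_imp_iff₂] using hfs
  have hcover : t.image f ∪ s = univ :=
    eq_univ_of_card _ (by rw [card_union_of_disjoint hdisj, card_image_of_injOn hf, hcard])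
  have hb' : b ∈ t.image f ∪ s := hcover ▸ mem_univ b
  exact (mem_union.1 hb').resolve_right hb

namespace ZMod

theorem natCast_inj_of_lt {m a b : ℕ} (ha : a < m) (hb : b < m) (h : (a : ZMod m) = b) :
    a = b := by
  rw [← val_cast_of_lt ha, ← val_cast_of_lt hb, h]

theorem natCast_ne_zero_of_pos_of_lt {m a : ℕ} (h0 : 0 < a) (h : a < m) : (a : ZMod m) ≠ 0 :=
  fun h' => h0.ne' (natCast_inj_of_lt h (Nat.zero_lt_of_lt h) (by simpa using h'))

theorem isUnit_two_of_even {n : ℕ} (hev : Even n) : IsUnit (2 : ZMod (n + 1)) := by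
  simpa using (unitOfCoprime 2 (Nat.coprime_two_left.mpr hev.add_one)).isUnit

theorem natCast_sub_one_eq_neg_two {n : ℕ} (hn : 0 < n) : ((n - 1 : ℕ) : ZMod (n + 1)) = -2 := by
  have h : ((n + 1 : ℕ) : ZMod (n + 1)) = 0 := natCast_self _
  push_cast [Nat.cast_pred hn] at h ⊢
  linear_combination h

end ZMod

namespace KnTotalColoring

variable {n : ℕ} (hn : 0 < n)

def last : Fin n := ⟨n - 1, Nat.sub_lt hn Nat.one_pos⟩

theorem val_last : (last hn : ℕ) = n - 1 := rfl

theorem tauPerm_apply_of_ne {i j : Fin n} (hji : j ≠ i) (hj : j ≠ last hn) :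
    tauPerm n hn i j = j :=
  Equiv.swap_apply_of_ne_of_ne hji hj

theorem tauPerm_apply_last (i : Fin n) : tauPerm n hn i (last hn) = i :=
  Equiv.swap_apply_right _ _

theorem tauPerm_last_apply (j : Fin n) : tauPerm n hn (last hn) j = j := by
  simp [tauPerm, last]

theorem tauPerm_apply_ne_last {i j : Fin n} (hji : j ≠ i) : tauPerm n hn i j ≠ last hn :=
  fun h => hji ((tauPerm n hn i).injective (h.trans (Equiv.swap_apply_left _ _).symm))

theorem cEdge_comm (i j : Fin n) : cEdge n hn i j = cEdge n hn j i := by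
  simp only [cEdge, Nat.add_comm (tauPerm n hn i j : ℕ)]

theorem cEdge_cast (i j : Fin n) : ((cEdge n hn i j : ℕ) : ZMod (n + 1)) =
    (tauPerm n hn i j : ℕ) + (tauPerm n hn j i : ℕ) + 2 := by
  simp [cEdge]

theorem val_add_one_lt_of_ne_last {t : Fin n} (ht : t ≠ last hn) : (t : ℕ) + 1 < n := by
  have : (t : ℕ) ≠ n - 1 := fun h => ht (Fin.ext h)
  omega

theorem cEdge_cast_of_ne_last {k j : Fin n} (hk : k ≠ last hn) (hjk : j ≠ k) :
    ((cEdge n hn k j : ℕ) : ZMod (n + 1)) = k + (tauPerm n hn k j : ℕ) + 2 := by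
  rw [cEdge_cast, tauPerm_apply_of_ne hn hjk.symm hk]
  ring

theorem cEdge_last_cast (j : Fin n) :
    ((cEdge n hn (last hn) j : ℕ) : ZMod (n + 1)) = 2 * j + 2 := by
  rw [cEdge_cast, tauPerm_last_apply, tauPerm_apply_last]
  ring

theorem cEdge_injOn (hev : Even n) (k : Fin n) : Set.InjOn (cEdge n hn k) {j | j ≠ k} := by
  intro j hj j' hj' h
  have hcast := congrArg (fun c : Fin (n + 1) => ((c : ℕ) : ZMod (n + 1))) h
  by_cases hk : k = last hn
  · subst hk
    rw [cEdge_last_cast hn j, cEdge_last_cast hn j'] at hcast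
    have hjj' := (ZMod.isUnit_two_of_even hev).mul_left_cancel (add_right_cancel hcast)
    exact Fin.ext (ZMod.natCast_inj_of_lt (by omega) (by omega) hjj')
  · rw [cEdge_cast_of_ne_last hn hk hj, cEdge_cast_of_ne_last hn hk hj'] at hcast
    have htau := add_left_cancel (add_right_cancel hcast)
    exact (tauPerm n hn k).injective (Fin.ext (ZMod.natCast_inj_of_lt (by omega) (by omega) htau))

theorem cEdge_val_ne_self (hev : Even n) {k j : Fin n} (hjk : j ≠ k) :
    (cEdge n hn k j : ℕ) ≠ k := by
  intro h
  have h' := congrArg (Nat.cast : ℕ → ZMod (n + 1)) h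
  by_cases hk : k = last hn
  · subst hk
    have hj := val_add_one_lt_of_ne_last hn hjk
    rw [cEdge_last_cast hn j, val_last, ZMod.natCast_sub_one_eq_neg_two hn] at h'
    have h2 : (2 : ZMod (n + 1)) * ((j + 2 : ℕ) : ZMod (n + 1)) = 0 := by
      push_cast
      linear_combination h'
    exact ZMod.natCast_ne_zero_of_pos_of_lt (by omega) (by omega)
      ((ZMod.isUnit_two_of_even hev).mul_right_eq_zero.1 h2)
  · rw [cEdge_cast_of_ne_last hn hk hjk] at h'
    have ht := val_add_one_lt_of_ne_last hn (tauPerm_apply_ne_last hn hjk)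
    have h2 : (((tauPerm n hn k j : ℕ) + 2 : ℕ) : ZMod (n + 1)) = 0 := by
      push_cast
      linear_combination h'
    exact ZMod.natCast_ne_zero_of_pos_of_lt (by omega) (by omega) h2

theorem cEdge_val_ne_succ_mod (hev : Even n) {k j : Fin n} (hjk : j ≠ k) :
    (cEdge n hn k j : ℕ) ≠ ((k : ℕ) + 1) % n := by
  intro h
  have h' := congrArg (Nat.cast : ℕ → ZMod (n + 1)) h
  by_cases hk : k = last hn
  · subst hk
    have hj := val_add_one_lt_of_ne_last hn hjk
    rw [cEdge_last_cast hn j, val_last, Nat.sub_add_cancel hn, Nat.mod_self, Nat.cast_zero] at h'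
    have h2 : (2 : ZMod (n + 1)) * ((j + 1 : ℕ) : ZMod (n + 1)) = 0 := by
      push_cast
      linear_combination h'
    exact ZMod.natCast_ne_zero_of_pos_of_lt (by omega) (by omega)
      ((ZMod.isUnit_two_of_even hev).mul_right_eq_zero.1 h2)
  · rw [cEdge_cast_of_ne_last hn hk hjk,
      Nat.mod_eq_of_lt (val_add_one_lt_of_ne_last hn hk)] at h'
    have ht := val_add_one_lt_of_ne_last hn (tauPerm_apply_ne_last hn hjk)
    have h1 : (((tauPerm n hn k j : ℕ) + 1 : ℕ) : ZMod (n + 1)) = 0 := by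
      push_cast at h' ⊢
      linear_combination h'
    exact ZMod.natCast_ne_zero_of_pos_of_lt (by omega) (by omega) h1

theorem exists_cEdge_eq (hev : Even n) {k : Fin n} {c : Fin (n + 1)} (hck : (c : ℕ) ≠ k)
    (hck' : (c : ℕ) ≠ ((k : ℕ) + 1) % n) : ∃ j ≠ k, cEdge n hn k j = c := by
  have hk_ne : (k : ℕ) ≠ ((k : ℕ) + 1) % n := by
    obtain ⟨m, rfl⟩ := hev
    rcases Nat.lt_or_ge ((k : ℕ) + 1) (m + m) with hlt | hge
    · rw [Nat.mod_eq_of_lt hlt]; omega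
    · rw [show (k : ℕ) + 1 = m + m by omega, Nat.mod_self]; omega
  let missing : Finset (Fin (n + 1)) :=
    {k.castSucc, ⟨((k : ℕ) + 1) % n, (Nat.mod_lt _ hn).trans n.lt_succ_self⟩}
  have hmem : ∀ {d : Fin (n + 1)}, d ∈ missing ↔ (d : ℕ) = k ∨ (d : ℕ) = ((k : ℕ) + 1) % n := by
    simp [missing, Fin.ext_iff]
  have hcard : #(univ.erase k) + #missing = Fintype.card (Fin (n + 1)) := by
    rw [card_erase_of_mem (mem_univ k), card_univ, card_pair (by simpa [Fin.ext_iff] using hk_ne)]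
    simp only [Fintype.card_fin]
    omega
  have hc : c ∈ (univ.erase k).image (cEdge n hn k) :=
    mem_image_of_injOn_of_card_add_eq ((cEdge_injOn hn hev k).mono fun j hj => (mem_erase.1 hj).1)
      (fun j hj => by
        rw [hmem, not_or]
        exact ⟨cEdge_val_ne_self hn hev (mem_erase.1 hj).1,
          cEdge_val_ne_succ_mod hn hev (mem_erase.1 hj).1⟩)
      hcard (by rw [hmem, not_or]; exact ⟨hck, hck'⟩)
  obtain ⟨j, hj, hjc⟩ := mem_image.1 hc
  exact ⟨j, (mem_erase.1 hj).1, hjc⟩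

end KnTotalColoring

open KnTotalColoring

/-- For even `n > 0`, the assignment `c_n(i, j) = (τ_i(j) + τ_j(i) + 2) mod (n+1)`
on edges together with `c_n(i) = i` on vertices is a proper total coloring of the
complete graph `K_n` with the `n + 1` colors `{0, 1, ..., n}`; moreover at each
vertex `k` exactly the two colors `k` and `(k + 1) mod n` are missing from the
edges incident with `k`. -/
theorem kn_canonical_total_coloring (n : ℕ) (hn : 0 < n) (hev : Even n) :
    IsTotalColoring (⊤ : SimpleGraph (Fin n)) (n + 1) (cVert n) (cEdge n hn) ∧
    ∀ k : Fin n, ∀ c : Fin (n + 1),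
      (∀ j : Fin n, j ≠ k → cEdge n hn k j ≠ c) ↔
        ((c : ℕ) = (k : ℕ) ∨ (c : ℕ) = ((k : ℕ) + 1) % n) := by
  refine ⟨⟨fun u v huv h => huv.ne (Fin.castSucc_injective n h),
    fun u v _ => cEdge_comm hn u v,
    fun u v w huv huw hvw => (cEdge_injOn hn hev u).ne huv.ne' huw.ne' hvw,
    fun u v huv => ⟨fun h => cEdge_val_ne_self hn hev huv.ne' (congrArg Fin.val h),
      fun h => cEdge_val_ne_self hn hev huv.ne (congrArg Fin.val ((cEdge_comm hn v u).trans h))⟩⟩,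
    fun k c => ⟨fun hmissing => ?_, ?_⟩⟩
  · by_contra hc
    rw [not_or] at hc
    obtain ⟨j, hjk, hjc⟩ := exists_cEdge_eq hn hev hc.1 hc.2
    exact hmissing j hjk hjc
  · rintro (hc | hc) j hjk rfl
    exacts [cEdge_val_ne_self hn hev hjk hc, cEdge_val_ne_succ_mod hn hev hjk hc]
end

section
/- For every integer n ≥ 2, the odd graph O_n admits a proper total coloring with n + 2 colors; that is, χ''(O_n) ≤ Δ(O_n) + 2 = n + 2, so O_n satisfies the Total Coloring Conjecture. -/
/-- The odd graph `O_n`: vertices are the `(n-1)`-element subsets of a fixed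
`(2n-1)`-element set, with two vertices adjacent iff the subsets are disjoint. -/
def oddGraph (n : ℕ) :
    SimpleGraph {s : Finset (Fin (2 * n - 1)) // s.card = n - 1} where
  Adj s t := s ≠ t ∧ Disjoint (s : Finset (Fin (2 * n - 1))) (t : Finset (Fin (2 * n - 1)))
  symm := ⟨fun _ _ h => ⟨h.1.symm, h.2.symm⟩⟩
  loopless := ⟨fun _ h => h.1 rfl⟩

/-!
Let `a = 2n - 2`. The vertices containing `a` form an independent set. Any other vertex is an
`(n-1)`-subset `B` of `{0, …, 2n-3}` whose only neighbour avoiding `a` is its complement there, so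
these vertices span a perfect matching, properly 2-coloured by whether `0 ∈ B`. Give the vertices
through `a` and the matching edges colour `0`, and the matching vertices colours `1` and `2`.

An edge from a vertex `A ∋ a` to `B` misses exactly one point `z`, and it is determined by
`X = {0, …, 2n-3} \ B` together with `z ∈ X`, since `A = (X \ {z}) ∪ {a}`. The label
`rank_X z - ∑ X ∈ ℤ/n` is injective in `z` both for fixed `X` (ranks in `X` are `< n - 1`) and for
fixed `W = X \ {z}`, where it equals `-(∑ W + rank of z among the n points outside W)`. So these
labels colour the edges at `a`-vertices properly with `n` colours; shifting them into `1, …, n+1`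
while avoiding the colour of `B` completes a total colouring with `n + 2` colours.
-/

open Finset

def sideColor (s : Bool) : ℕ := if s then 1 else 2

/-- Label `x` becomes colour `x + 2`, except that colour `2` is replaced by the free colour `1`
when the far endpoint has colour `sideColor false = 2`. -/
def crossColor (x : ℕ) (s : Bool) : ℕ := if s || x ≠ 0 then x + 2 else 1

lemma sideColor_ne_zero (s : Bool) : sideColor s ≠ 0 := by
  cases s <;> simp [sideColor]

lemma sideColor_injective : Function.Injective sideColor := by
  intro s t; cases s <;> cases t <;> simp [sideColor]

lemma crossColor_inj {x y : ℕ} {s t : Bool} (h : crossColor x s = crossColor y t) : x = y := by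
  unfold crossColor at h; split_ifs at h <;> grind

lemma crossColor_ne_zero (x : ℕ) (s : Bool) : crossColor x s ≠ 0 := by
  unfold crossColor; split_ifs <;> omega

lemma crossColor_ne_sideColor (x : ℕ) (s : Bool) : crossColor x s ≠ sideColor s := by
  unfold crossColor sideColor; cases s <;> split_ifs <;> simp_all

lemma crossColor_lt {x k : ℕ} (hx : x < k) (s : Bool) : crossColor x s < k + 2 := by
  unfold crossColor; split_ifs <;> omega

theorem totalColorable_of_indep_of_matching {V : Type*} (G : SimpleGraph V) {k : ℕ} (hk : 0 < k)
    (I : V → Prop) (side : V → Bool) (ψ : V → V → Fin k)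
    (hI : ∀ a b, I a → I b → ¬ G.Adj a b)
    (hmatch : ∀ u v w, ¬ I u → ¬ I v → ¬ I w → G.Adj u v → G.Adj u w → v = w)
    (hside : ∀ u v, ¬ I u → ¬ I v → G.Adj u v → side u ≠ side v)
    (hψI : ∀ a b b', I a → G.Adj a b → G.Adj a b' → ψ a b = ψ a b' → b = b')
    (hψJ : ∀ a a' b, I a → I a' → G.Adj a b → G.Adj a' b → ψ a b = ψ a' b → a = a') :
    TotalColorable G (k + 2) := by
  classical
  let cv : V → ℕ := fun u => if I u then 0 else sideColor (side u)
  let ce : V → V → ℕ := fun u v =>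
    if I u then crossColor (ψ u v) (side v) else if I v then crossColor (ψ v u) (side u) else 0
  refine ⟨fun u => ⟨cv u, ?_⟩, fun u v => ⟨ce u v, ?_⟩, ?_, ?_, ?_, ?_⟩
  · simp only [cv, sideColor]; split_ifs <;> omega
  · simp only [ce]; split_ifs <;> first | omega | exact crossColor_lt (ψ _ _).2 _
  · intro u v h
    simp only [ne_eq, Fin.mk.injEq, cv]
    by_cases hu : I u <;> by_cases hv : I v <;> simp only [hu, hv, if_true, if_false]
    · exact fun _ => hI u v hu hv h
    · exact (sideColor_ne_zero _).symm
    · exact sideColor_ne_zero _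
    · exact sideColor_injective.ne (hside u v hu hv h)
  · intro u v h
    simp only [Fin.mk.injEq, ce]
    by_cases hu : I u <;> by_cases hv : I v <;> simp only [hu, hv, if_true, if_false]
    exact absurd h (hI u v hu hv)
  · intro u v w hv hw hvw
    simp only [ne_eq, Fin.mk.injEq, ce]
    by_cases hu : I u
    · simp only [hu, if_true]
      exact fun h => hvw (hψI u v w hu hv hw (Fin.ext (crossColor_inj h)))
    · by_cases hv' : I v <;> by_cases hw' : I w <;> simp only [hu, hv', hw', if_true, if_false]
      · exact fun h => hvw (hψJ v w u hv' hw' hv.symm hw.symm (Fin.ext (crossColor_inj h)))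
      · exact crossColor_ne_zero _ _
      · exact (crossColor_ne_zero _ _).symm
      · exact fun _ => hvw (hmatch u v w hu hv' hw' hv hw)
  · intro u v h
    simp only [ne_eq, Fin.mk.injEq, ce, cv]
    by_cases hu : I u <;> by_cases hv : I v <;> simp only [hu, hv, if_true, if_false]
    · exact absurd h (hI u v hu hv)
    · exact ⟨crossColor_ne_zero _ _, crossColor_ne_sideColor _ _⟩
    · exact ⟨crossColor_ne_sideColor _ _, crossColor_ne_zero _ _⟩
    · exact ⟨(sideColor_ne_zero _).symm, (sideColor_ne_zero _).symm⟩

lemma ZMod.natCast_inj_of_lt_s7 {n a b : ℕ} (ha : a < n) (hb : b < n) (h : (a : ZMod n) = b) :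
    a = b := by
  rwa [ZMod.natCast_eq_natCast_iff', Nat.mod_eq_of_lt ha, Nat.mod_eq_of_lt hb] at h

def rank (X : Finset ℕ) (z : ℕ) : ℕ := #{x ∈ X | x < z}

lemma rank_lt_card {X : Finset ℕ} {z : ℕ} (hz : z ∈ X) : rank X z < #X :=
  card_lt_card (filter_ssubset.mpr ⟨z, hz, lt_irrefl z⟩)

lemma rank_strictMonoOn (X : Finset ℕ) : StrictMonoOn (rank X) X := by
  intro z hz z' _ h
  refine card_lt_card ⟨fun x hx => ?_, fun hsub => ?_⟩
  · simp only [mem_filter] at hx ⊢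
    exact ⟨hx.1, hx.2.trans h⟩
  · exact lt_irrefl z (mem_filter.mp (hsub (mem_filter.mpr ⟨hz, h⟩))).2

lemma rank_insert_self (W : Finset ℕ) (z : ℕ) : rank (insert z W) z = rank W z := by
  simp [rank, filter_insert]

lemma rank_add_rank_sdiff {W Y : Finset ℕ} (hWY : W ⊆ Y) (z : ℕ) :
    rank W z + rank (Y \ W) z = rank Y z := by
  rw [rank, rank, rank, ← card_union_of_disjoint (disjoint_filter_filter disjoint_sdiff),
    ← filter_union, union_sdiff_of_subset hWY]

lemma rank_range {m z : ℕ} (hz : z ≤ m) : rank (range m) z = z := by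
  rw [rank, show {x ∈ range m | x < z} = range z by ext; simp; omega, card_range]

def flagColor (n : ℕ) (X : Finset ℕ) (z : ℕ) : ZMod n := rank X z - ∑ x ∈ X, (x : ZMod n)

lemma flagColor_injOn {n : ℕ} {X : Finset ℕ} (hX : #X ≤ n) : Set.InjOn (flagColor n X) X := by
  intro z hz z' hz' h
  have hr := ZMod.natCast_inj_of_lt_s7 ((rank_lt_card hz).trans_le hX)
    ((rank_lt_card hz').trans_le hX) (sub_left_inj.mp h)
  exact (rank_strictMonoOn X).injOn hz hz' hr

lemma flagColor_insert {n m z : ℕ} {W : Finset ℕ} (hW : W ⊆ range m) (hz : z ∉ W) (hzm : z ≤ m) :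
    flagColor n (insert z W) z = -(rank (range m \ W) z + ∑ x ∈ W, (x : ZMod n)) := by
  have hsplit := rank_add_rank_sdiff hW z
  rw [rank_range hzm] at hsplit
  rw [flagColor, rank_insert_self, sum_insert hz]
  nth_rw 2 [← hsplit]
  push_cast
  ring

lemma flagColor_insert_injOn {n m : ℕ} {W : Finset ℕ} (hW : W ⊆ range m)
    (hn : #(range m \ W) ≤ n) :
    Set.InjOn (fun z => flagColor n (insert z W) z) (range m \ W : Finset ℕ) := by
  intro z hz z' hz' h
  obtain ⟨hzm, hzW⟩ := mem_sdiff.mp hz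
  obtain ⟨hzm', hzW'⟩ := mem_sdiff.mp hz'
  simp only [flagColor_insert hW hzW (mem_range.mp hzm).le,
    flagColor_insert hW hzW' (mem_range.mp hzm').le, neg_inj, add_left_inj] at h
  exact (rank_strictMonoOn _).injOn hz hz'
    (ZMod.natCast_inj_of_lt_s7 ((rank_lt_card hz).trans_le hn) ((rank_lt_card hz').trans_le hn) h)

namespace oddGraph

variable {n : ℕ} {u v w : {s : Finset (Fin (2 * n - 1)) // s.card = n - 1}} {x : ℕ}

def natSet (u : {s : Finset (Fin (2 * n - 1)) // s.card = n - 1}) : Finset ℕ :=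
  u.1.map Fin.valEmbedding

lemma natSet_subset : natSet u ⊆ range (2 * n - 1) := by
  intro x hx
  obtain ⟨i, -, rfl⟩ := mem_map.mp hx
  exact mem_range.mpr i.2

lemma card_natSet : #(natSet u) = n - 1 := (card_map _).trans u.2

lemma natSet_injective :
    Function.Injective (natSet : {s : Finset (Fin (2 * n - 1)) // s.card = n - 1} → _) :=
  fun _ _ h => Subtype.ext (map_inj.mp h)

lemma disjoint_natSet (h : (oddGraph n).Adj u v) : Disjoint (natSet u) (natSet v) :=
  (disjoint_map _).mpr h.2

lemma two_le_of_adj (h : (oddGraph n).Adj u v) : 2 ≤ n := by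
  by_contra hn
  have hempty : ∀ w : {s : Finset (Fin (2 * n - 1)) // s.card = n - 1}, w.1 = ∅ :=
    fun w => card_eq_zero.mp (w.2.trans (by omega))
  exact h.1 (Subtype.ext ((hempty u).trans (hempty v).symm))

/-- For adjacent `u`, `v` the sum runs over one point (`range_sdiff_eq_missing`). -/
def missing (u v : {s : Finset (Fin (2 * n - 1)) // s.card = n - 1}) : ℕ :=
  ∑ x ∈ range (2 * n - 1) \ (natSet u ∪ natSet v), x

lemma missing_comm : missing u v = missing v u := by
  rw [missing, missing, union_comm]

lemma range_sdiff_eq_missing (h : (oddGraph n).Adj u v) :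
    range (2 * n - 1) \ (natSet u ∪ natSet v) = {missing u v} := by
  have hn := two_le_of_adj h
  have hcard : #(range (2 * n - 1) \ (natSet u ∪ natSet v)) = 1 := by
    rw [card_sdiff_of_subset (union_subset natSet_subset natSet_subset),
      card_union_of_disjoint (disjoint_natSet h), card_natSet, card_natSet, card_range]
    omega
  obtain ⟨z, hz⟩ := card_eq_one.mp hcard
  rw [missing, hz, sum_singleton]

lemma missing_mem_sdiff (h : (oddGraph n).Adj u v) :
    missing u v ∈ range (2 * n - 1) \ (natSet u ∪ natSet v) :=
  (range_sdiff_eq_missing h).symm ▸ mem_singleton_self _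

lemma missing_lt (h : (oddGraph n).Adj u v) : missing u v < 2 * n - 1 :=
  mem_range.mp (mem_sdiff.mp (missing_mem_sdiff h)).1

lemma missing_not_mem_left (h : (oddGraph n).Adj u v) : missing u v ∉ natSet u :=
  fun hu => (mem_sdiff.mp (missing_mem_sdiff h)).2 (mem_union_left _ hu)

lemma missing_not_mem_right (h : (oddGraph n).Adj u v) : missing u v ∉ natSet v :=
  missing_comm (u := u) ▸ missing_not_mem_left h.symm

lemma mem_or_mem_or_eq_missing (h : (oddGraph n).Adj u v) (hx : x < 2 * n - 1) :
    x ∈ natSet u ∨ x ∈ natSet v ∨ x = missing u v := by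
  by_contra! hne
  have : x ∈ range (2 * n - 1) \ (natSet u ∪ natSet v) := by simp [hx, hne.1, hne.2.1]
  exact hne.2.2 (mem_singleton.mp (range_sdiff_eq_missing h ▸ this))

lemma mem_iff_of_adj (h : (oddGraph n).Adj u v) :
    x ∈ natSet v ↔ x < 2 * n - 1 ∧ x ∉ natSet u ∧ x ≠ missing u v := by
  refine ⟨fun hx => ⟨mem_range.mp (natSet_subset hx), disjoint_right.mp (disjoint_natSet h) hx,
    fun he => missing_not_mem_right h (he ▸ hx)⟩, fun ⟨hx, hxu, hxz⟩ => ?_⟩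
  have := mem_or_mem_or_eq_missing h hx
  tauto

lemma eq_of_missing_eq (hv : (oddGraph n).Adj u v) (hw : (oddGraph n).Adj u w)
    (h : missing u v = missing u w) : v = w :=
  natSet_injective (ext fun _ => by rw [mem_iff_of_adj hv, mem_iff_of_adj hw, h])

lemma missing_eq_apex (h : (oddGraph n).Adj u v) (hu : 2 * n - 2 ∉ natSet u)
    (hv : 2 * n - 2 ∉ natSet v) : missing u v = 2 * n - 2 := by
  have := two_le_of_adj h
  have := mem_or_mem_or_eq_missing h (x := 2 * n - 2) (by omega)
  tauto

lemma eq_of_apex_not_mem (hv : (oddGraph n).Adj u v) (hw : (oddGraph n).Adj u w)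
    (hu : 2 * n - 2 ∉ natSet u) (hv' : 2 * n - 2 ∉ natSet v) (hw' : 2 * n - 2 ∉ natSet w) :
    v = w :=
  eq_of_missing_eq hv hw ((missing_eq_apex hv hu hv').trans (missing_eq_apex hw hu hw').symm)

lemma zero_mem_iff_not_mem (h : (oddGraph n).Adj u v) (hu : 2 * n - 2 ∉ natSet u)
    (hv : 2 * n - 2 ∉ natSet v) : 0 ∈ natSet u ↔ 0 ∉ natSet v := by
  have hn := two_le_of_adj h
  refine ⟨fun h0u => disjoint_left.mp (disjoint_natSet h) h0u, fun h0v => ?_⟩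
  rcases mem_or_mem_or_eq_missing h (x := 0) (by omega) with h0 | h0 | h0
  · exact h0
  · exact absurd h0 h0v
  · rw [missing_eq_apex h hu hv] at h0
    omega

lemma erase_apex_subset : (natSet u).erase (2 * n - 2) ⊆ range (2 * n - 2) := by
  intro x hx
  have := mem_range.mp (natSet_subset (mem_of_mem_erase hx))
  exact mem_range.mpr (by have := ne_of_mem_erase hx; omega)

lemma natSet_subset_range_apex (hu : 2 * n - 2 ∉ natSet u) : natSet u ⊆ range (2 * n - 2) :=
  erase_eq_of_notMem hu ▸ erase_apex_subset

lemma range_apex_sdiff_eq (h : (oddGraph n).Adj u v) (hu : 2 * n - 2 ∈ natSet u) :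
    range (2 * n - 2) \ natSet v = insert (missing u v) ((natSet u).erase (2 * n - 2)) := by
  ext x
  simp only [mem_sdiff, mem_range, mem_insert, mem_erase]
  constructor
  · rintro ⟨hx, hxv⟩
    rcases mem_or_mem_or_eq_missing h (x := x) (by omega) with hxu | hxv' | hxz
    · exact Or.inr ⟨by omega, hxu⟩
    · exact absurd hxv' hxv
    · exact Or.inl hxz
  · rintro (rfl | ⟨hx, hxu⟩)
    · have : missing u v ≠ 2 * n - 2 := fun he => missing_not_mem_left h (he ▸ hu)
      exact ⟨by have := missing_lt h; omega, missing_not_mem_right h⟩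
    · exact ⟨by have := mem_range.mp (natSet_subset hxu); omega,
        disjoint_left.mp (disjoint_natSet h) hxu⟩

lemma missing_mem_range_apex_sdiff (h : (oddGraph n).Adj u v) (hu : 2 * n - 2 ∈ natSet u) :
    missing u v ∈ range (2 * n - 2) \ natSet v :=
  range_apex_sdiff_eq h hu ▸ mem_insert_self _ _

def edgeLabel (n : ℕ) (u v : {s : Finset (Fin (2 * n - 1)) // s.card = n - 1}) : ZMod n :=
  flagColor n (range (2 * n - 2) \ natSet v) (missing u v)

lemma edgeLabel_injective_right (hu : 2 * n - 2 ∈ natSet u) (hv : (oddGraph n).Adj u v)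
    (hw : (oddGraph n).Adj u w) (h : edgeLabel n u v = edgeLabel n u w) : v = w := by
  have hn := two_le_of_adj hv
  set W := (natSet u).erase (2 * n - 2)
  have hcard : #(range (2 * n - 2) \ W) ≤ n := by
    rw [card_sdiff_of_subset erase_apex_subset, card_erase_of_mem hu, card_natSet, card_range]
    omega
  have hmem : ∀ {v}, (oddGraph n).Adj u v → missing u v ∈ range (2 * n - 2) \ W := fun hv =>
    mem_sdiff.mpr ⟨(mem_sdiff.mp (missing_mem_range_apex_sdiff hv hu)).1,
      fun hz => missing_not_mem_left hv (mem_of_mem_erase hz)⟩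
  rw [edgeLabel, edgeLabel, range_apex_sdiff_eq hv hu, range_apex_sdiff_eq hw hu] at h
  exact eq_of_missing_eq hv hw
    (flagColor_insert_injOn erase_apex_subset hcard (hmem hv) (hmem hw) h)

lemma edgeLabel_injective_left (hu : 2 * n - 2 ∈ natSet u) (hw : 2 * n - 2 ∈ natSet w)
    (hv : (oddGraph n).Adj u v) (hv' : (oddGraph n).Adj w v)
    (h : edgeLabel n u v = edgeLabel n w v) : u = w := by
  have hn := two_le_of_adj hv
  have hcard : #(range (2 * n - 2) \ natSet v) ≤ n := by
    rw [card_sdiff_of_subset (natSet_subset_range_apex (disjoint_left.mp (disjoint_natSet hv) hu)),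
      card_natSet, card_range]
    omega
  have hz := flagColor_injOn hcard (missing_mem_range_apex_sdiff hv hu)
    (missing_mem_range_apex_sdiff hv' hw) h
  rw [missing_comm, missing_comm (u := w)] at hz
  exact eq_of_missing_eq hv.symm hv'.symm hz

end oddGraph

/-- For every `n ≥ 2`, the odd graph `O_n` (which is `n`-regular) admits a
proper total coloring with `n + 2 = Δ(O_n) + 2` colors, i.e. it satisfies the
Total Coloring Conjecture. -/
theorem oddGraph_tcc (n : ℕ) (hn : 2 ≤ n) :
    TotalColorable (oddGraph n) (n + 2) := by
  have : NeZero n := ⟨by omega⟩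
  open oddGraph in
  refine totalColorable_of_indep_of_matching (oddGraph n) (by omega)
    (fun u => 2 * n - 2 ∈ natSet u) (fun u => decide (0 ∈ natSet u))
    (fun u v => (ZMod.finEquiv n).symm (edgeLabel n u v)) ?_ ?_ ?_ ?_ ?_
  · exact fun u v hu hv h => disjoint_left.mp (disjoint_natSet h) hu hv
  · exact fun u v w hu hv hw huv huw => eq_of_apex_not_mem huv huw hu hv hw
  · intro u v hu hv h
    have := zero_mem_iff_not_mem h hu hv
    simp only [ne_eq, decide_eq_decide]
    tauto
  · exact fun u v w hu hv hw h =>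
      edgeLabel_injective_right hu hv hw ((ZMod.finEquiv n).symm.injective h)
  · exact fun u w v hu hw hv hv' h =>
      edgeLabel_injective_left hu hw hv hv' ((ZMod.finEquiv n).symm.injective h)
end
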